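/- arXiv:2104.13959 — 7 statements merged into one kernel-verified Lean document; each statement's English description precedes it below -/
import Mathlib

section
/- Let H be a real separable Hilbert space, I=[0,T] with T>0, 𝒜 : H → H satisfying (H_𝒜²) (Lipschitz with constant M>0), and C : I × H ⇉ H with nonempty closed values satisfying (H₁) (with constants κ_r and L ≥ 0). Let x₀ ∈ H with 𝒜(x₀) ∈ C(0,x₀). Then for all t ∈ I, x ∈ H, and every w ∈ 𝒜(x) − cl co Proj_{C(t,x)}(𝒜(x)), one has ‖w‖ ≤ (M+L)‖x − x₀‖ + κ_r·t, where r := max{‖𝒜(x)‖, ‖𝒜(x₀)‖} and κ_r is the constant given by (H₁). -/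
open Metric Set MeasureTheory Filter Pointwise

noncomputable section

variable {H : Type} [NormedAddCommGroup H] [InnerProductSpace ℝ H]

/-- The Clarke generalized directional derivative of `f` at `x` in direction `h`. -/
def clarkeDeriv (f : H → ℝ) (x h : H) : ℝ :=
  Filter.limsup (fun p : H × ℝ => (f (p.1 + p.2 • h) - f p.1) / p.2)
    ((nhds x) ×ˢ (nhdsWithin 0 (Ioi (0:ℝ))))

/-- The Clarke subdifferential of `f` at `x`. -/
def clarkeSubdiff (f : H → ℝ) (x : H) : Set H :=
  {v : H | ∀ h : H, (inner ℝ v h : ℝ) ≤ clarkeDeriv f x h}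

/-- The closure of a set with respect to the weak topology of `H`. -/
def weakClosure (A : Set H) : Set H :=
  (toWeakSpace ℝ H) ⁻¹' (closure ((toWeakSpace ℝ H) '' A))

/-- The Clarke normal cone to `S` at `x`: the weak closure of `ℝ₊ ∂d_S(x)`. -/
def clarkeNormalCone (S : Set H) (x : H) : Set H :=
  weakClosure {w : H | ∃ l : ℝ, ∃ v ∈ clarkeSubdiff (fun u => infDist u S) x,
    0 ≤ l ∧ w = l • v}

/-- The (possibly empty) set of nearest points of `x` in `S`. -/
def projSet (S : Set H) (x : H) : Set H :=
  {y ∈ S | ‖x - y‖ = infDist x S}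

/-- A family of closed sets is equi-uniformly subsmooth. -/
def EquiUniformlySubsmooth {ι : Sort*} (S : ι → Set H) : Prop :=
  ∀ ε > (0:ℝ), ∃ δ > (0:ℝ), ∀ j : ι, ∀ x₁ ∈ S j, ∀ x₂ ∈ S j, ‖x₁ - x₂‖ < δ →
    ∀ v₁ ∈ clarkeNormalCone (S j) x₁ ∩ closedBall 0 1,
    ∀ v₂ ∈ clarkeNormalCone (S j) x₂ ∩ closedBall 0 1,
      -ε * ‖x₁ - x₂‖ ≤ (inner ℝ (v₁ - v₂) (x₁ - x₂) : ℝ)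

/-- The Hausdorff measure of non-compactness of a set. -/
def hausMNC (A : Set H) : ℝ :=
  sInf {r : ℝ | 0 < r ∧ ∃ F : Finset H, A ⊆ ⋃ c ∈ F, closedBall c r}

/-- `v` is the derivative of the absolutely continuous function `x` on `[0,T]`. -/
def IsACDerivOn {E : Type} [NormedAddCommGroup E] [NormedSpace ℝ E] (T : ℝ)
    (x v : ℝ → E) : Prop :=
  IntegrableOn v (Icc 0 T) volume ∧ ∀ t ∈ Icc 0 T, x t = x 0 + ∫ s in (0:ℝ)..t, v s

theorem closure_convexHull_projSet_subset_closedBall (S : Set H) (x : H) :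
    closure (convexHull ℝ (projSet S x)) ⊆ closedBall x (infDist x S) := by
  refine closure_minimal (convexHull_min ?_ (convex_closedBall _ _)) isClosed_closedBall
  intro y hy
  rw [mem_closedBall, dist_comm, dist_eq_norm]
  exact hy.2.le

theorem norm_bound_G_general
    {H : Type} [NormedAddCommGroup H] [InnerProductSpace ℝ H]
    (T : ℝ) (hT : 0 < T)
    (A : H → H) (M : ℝ)
    -- (H_𝒜²): Lipschitz continuity
    (hA2 : ∀ x y : H, ‖A x - A y‖ ≤ M * ‖x - y‖)
    (C : ℝ → H → Set H)
    -- (H₁): truncated-Hausdorff Lipschitz condition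
    (L : ℝ) (κ : ℝ → ℝ)
    (hH1 : ∀ r : ℝ, 0 ≤ r → 0 ≤ κ r ∧
      ∀ s ∈ Icc (0:ℝ) T, ∀ t ∈ Icc (0:ℝ) T, ∀ x y : H, ∀ z ∈ closedBall (0:H) r,
        |infDist z (C t x) - infDist z (C s y)| ≤ κ r * |t - s| + L * ‖x - y‖)
    (x₀ : H) (hx₀ : A x₀ ∈ C 0 x₀) :
    ∀ t ∈ Icc (0:ℝ) T, ∀ x : H,
      ∀ w ∈ ({A x} - closure (convexHull ℝ (projSet (C t x) (A x))) : Set H),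
        ‖w‖ ≤ (M + L) * ‖x - x₀‖ + κ (max ‖A x‖ ‖A x₀‖) * t := by
  rintro t ht x _ ⟨_, rfl, y, hy, rfl⟩
  set r := max ‖A x‖ ‖A x₀‖
  have hAx : A x ∈ closedBall (0 : H) r := by simp [r]
  have hvar := (hH1 r ((norm_nonneg _).trans (le_max_left _ _))).2 0 ⟨le_rfl, hT.le⟩ t ht x x₀
    (A x) hAx
  rw [sub_zero, abs_of_nonneg ht.1] at hvar
  have hy_le : ‖A x - y‖ ≤ infDist (A x) (C t x) := by
    simpa [dist_eq_norm'] using closure_convexHull_projSet_subset_closedBall _ _ hy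
  have hx₀_le : infDist (A x) (C 0 x₀) ≤ M * ‖x - x₀‖ :=
    (infDist_le_dist_of_mem hx₀).trans ((dist_eq_norm _ _).trans_le (hA2 x x₀))
  linarith [(abs_le.mp hvar).2]

/-- Proposition 4.1(v): norm bound for `G(t,x) = 𝒜(x) − cl co Proj_{C(t,x)}(𝒜(x))`. -/
theorem norm_bound_G
    {H : Type} [NormedAddCommGroup H] [InnerProductSpace ℝ H] [CompleteSpace H]
    [TopologicalSpace.SeparableSpace H]
    (T : ℝ) (hT : 0 < T)
    (A : H → H) (M : ℝ) (hM : 0 < M)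
    -- (H_𝒜²): Lipschitz continuity
    (hA2 : ∀ x y : H, ‖A x - A y‖ ≤ M * ‖x - y‖)
    (C : ℝ → H → Set H)
    (hC : ∀ t ∈ Icc (0:ℝ) T, ∀ x : H, (C t x).Nonempty ∧ IsClosed (C t x))
    -- (H₁): truncated-Hausdorff Lipschitz condition
    (L : ℝ) (hL0 : 0 ≤ L) (κ : ℝ → ℝ)
    (hH1 : ∀ r : ℝ, 0 ≤ r → 0 ≤ κ r ∧
      ∀ s ∈ Icc (0:ℝ) T, ∀ t ∈ Icc (0:ℝ) T, ∀ x y : H, ∀ z ∈ closedBall (0:H) r,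
        |infDist z (C t x) - infDist z (C s y)| ≤ κ r * |t - s| + L * ‖x - y‖)
    (x₀ : H) (hx₀ : A x₀ ∈ C 0 x₀) :
    ∀ t ∈ Icc (0:ℝ) T, ∀ x : H,
      ∀ w ∈ ({A x} - closure (convexHull ℝ (projSet (C t x) (A x))) : Set H),
        ‖w‖ ≤ (M + L) * ‖x - x₀‖ + κ (max ‖A x‖ ‖A x₀‖) * t :=
  norm_bound_G_general T hT A M hA2 C L κ hH1 x₀ hx₀

end
end

section
/- Let H be a real separable Hilbert space and let S ⊆ H be a nonempty closed ball-compact set (S ∩ r𝔹 is compact for every r>0). Then for every u ∈ H with u ∉ S, the Clarke subdifferential of the distance function satisfies ∂d_S(u) = (u − cl co Proj_S(u)) / d_S(u), i.e. ∂d_S(u) = { (u − p)/d_S(u) : p ∈ cl co Proj_S(u) }. -/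
/-!
Write `d = d_S(u) > 0` and `Q(y, τ) = (d_S(y + τh) - d_S(y)) / τ`. For `p ∈ Proj_S(u)`, along
`y = u - t (u - p)`, `τ = t²` one has `d_S(y) ≤ (1 - t) d` and `d_S(y + τh) ≥ d - ‖u - y - τh‖`,
and a second-order expansion of the norm at `u - p` gives `Q ≥ ⟪(u - p)/d, h⟫ - O(t)`; hence
`⟪(u - p)/d, h⟫ ≤ d_S°(u; h)`. Conversely, for `s ∈ Proj_S(y)` convexity of the norm gives
`Q(y, τ) ≤ ⟪a/‖a‖, h⟫` with `a = y + τh - s`; by ball-compactness these `s` can only accumulate at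
points of `Proj_S(u)` as `y → u`, so `d_S°(u; h) ≤ max_{p ∈ Proj_S(u)} ⟪(u - p)/d, h⟫`. Thus both
sides of the formula are closed convex sets with the same support function, and Hahn–Banach
separation in the Hilbert space `H` identifies them.
-/

open Metric Set MeasureTheory Filter Pointwise

noncomputable section

variable {H : Type} [NormedAddCommGroup H] [InnerProductSpace ℝ H]

open scoped InnerProductSpace Topology NNReal

section ClarkeDerivative

variable {f : H → ℝ} {K : ℝ≥0}

theorem LipschitzWith.eventually_abs_clarke_quotient_le (hf : LipschitzWith K f) (x h : H) :
    ∀ᶠ z : H × ℝ in 𝓝 x ×ˢ 𝓝[>] 0, |(f (z.1 + z.2 • h) - f z.1) / z.2| ≤ K * ‖h‖ := by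
  filter_upwards [prod_mem_prod univ_mem self_mem_nhdsWithin] with z hz
  replace hz : 0 < z.2 := hz.2
  rw [abs_div, abs_of_pos hz, div_le_iff₀ hz, ← Real.dist_eq]
  calc dist (f (z.1 + z.2 • h)) (f z.1) ≤ K * dist (z.1 + z.2 • h) z.1 := hf.dist_le_mul _ _
    _ = K * ‖h‖ * z.2 := by
      rw [dist_self_add_left, norm_smul, Real.norm_of_nonneg (le_of_lt hz)]; ring

variable {x h : H}

theorem LipschitzWith.clarkeDeriv_le_of_eventually_le (hf : LipschitzWith K f) {c : ℝ}
    (hc : ∀ᶠ z : H × ℝ in 𝓝 x ×ˢ 𝓝[>] 0, (f (z.1 + z.2 • h) - f z.1) / z.2 ≤ c) :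
    clarkeDeriv f x h ≤ c := by
  have hbdd := isBoundedUnder_of_eventually_ge
    ((hf.eventually_abs_clarke_quotient_le x h).mono fun z hz => (abs_le.1 hz).1)
  exact limsup_le_of_le hbdd.isCoboundedUnder_flip hc

theorem LipschitzWith.le_clarkeDeriv_of_tendsto (hf : LipschitzWith K f) {ι : Type*}
    {l : Filter ι} [l.NeBot] {g : ι → H × ℝ} (hg : Tendsto g l (𝓝 x ×ˢ 𝓝[>] 0)) {b : ι → ℝ} {c : ℝ}
    (hb : Tendsto b l (𝓝 c))
    (hbg : ∀ᶠ i in l, b i ≤ (f ((g i).1 + (g i).2 • h) - f (g i).1) / (g i).2) :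
    c ≤ clarkeDeriv f x h := by
  have hbdd := isBoundedUnder_of_eventually_le
    ((hf.eventually_abs_clarke_quotient_le x h).mono fun z hz => (abs_le.1 hz).2)
  refine le_of_forall_sub_le fun ε hε => le_limsup_of_frequently_le ?_ hbdd
  refine hg.frequently (Eventually.frequently ?_)
  filter_upwards [hb.eventually (lt_mem_nhds (sub_lt_self c hε)), hbg] with i hi hbi
  exact hi.le.trans hbi

end ClarkeDerivative

theorem isClosed_clarkeSubdiff (f : H → ℝ) (x : H) : IsClosed (clarkeSubdiff f x) := by
  simp only [clarkeSubdiff, ofPred_forall]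
  exact isClosed_iInter fun h => isClosed_le (continuous_id.inner continuous_const) continuous_const

theorem convex_clarkeSubdiff (f : H → ℝ) (x : H) : Convex ℝ (clarkeSubdiff f x) := by
  intro v hv w hw a b ha hb hab h
  rw [inner_add_left, real_inner_smul_left, real_inner_smul_left]
  calc a * ⟪v, h⟫_ℝ + b * ⟪w, h⟫_ℝ ≤ a * clarkeDeriv f x h + b * clarkeDeriv f x h := by
        gcongr <;> [exact hv h; exact hw h]
    _ = clarkeDeriv f x h := by rw [← add_mul, hab, one_mul]

theorem norm_sub_norm_le_inner (a b : H) : ‖a‖ - ‖b‖ ≤ ⟪‖a‖⁻¹ • a, a - b⟫_ℝ := by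
  rcases eq_or_ne a 0 with rfl | ha
  · simp
  have hna : 0 < ‖a‖ := norm_pos_iff.2 ha
  rw [real_inner_smul_left, inner_sub_right, real_inner_self_eq_norm_sq, le_inv_mul_iff₀ hna]
  nlinarith [real_inner_le_norm a b]

theorem norm_add_le_inner_add_sq_div {a : H} (ha : a ≠ 0) (w : H) :
    ‖a + w‖ ≤ ‖a‖ + ⟪‖a‖⁻¹ • a, w⟫_ℝ + ‖w‖ ^ 2 / (2 * ‖a‖) := by
  have hna : 0 < ‖a‖ := norm_pos_iff.2 ha
  rw [real_inner_smul_left, ← mul_le_mul_iff_right₀ (by positivity : 0 < 2 * ‖a‖)]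
  field_simp
  nlinarith [norm_add_sq_real a w, sq_nonneg (‖a‖ - ‖a + w‖)]

theorem isCompact_inter_closedBall_of_center {X : Type*} [PseudoMetricSpace X] {S : Set X}
    {x₀ : X} (hbc : ∀ r : ℝ, 0 < r → IsCompact (S ∩ closedBall x₀ r)) (x : X) (r : ℝ) :
    IsCompact (S ∩ closedBall x r) := by
  have hsub : closedBall x r ⊆ closedBall x₀ (|r| + dist x x₀ + 1) :=
    closedBall_subset_closedBall' (by linarith [le_abs_self r])
  rw [← inter_eq_right.2 hsub, ← inter_assoc]
  exact (hbc _ (by positivity)).inter_right isClosed_closedBall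

theorem exists_mem_projSet {E : Type} [NormedAddCommGroup E] {S : Set E}
    (hS : ∀ (x : E) (r : ℝ), IsCompact (S ∩ closedBall x r)) (hne : S.Nonempty) (x : E) :
    (projSet S x).Nonempty := by
  obtain ⟨z, hz⟩ := hne
  obtain ⟨y, ⟨hyS, -⟩, hy⟩ :=
    (hS x (dist z x)).exists_infDist_eq_dist ⟨z, hz, mem_closedBall.2 le_rfl⟩ x
  rw [infDist_inter_closedBall_of_mem hz] at hy
  exact ⟨y, hyS, by rw [hy, dist_eq_norm]⟩

theorem inner_le_clarkeDeriv_infDist {S : Set H} {u p : H} (hd : 0 < infDist u S)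
    (hp : p ∈ projSet S u) (h : H) :
    ⟪(infDist u S)⁻¹ • (u - p), h⟫_ℝ ≤ clarkeDeriv (infDist · S) u h := by
  set d := infDist u S
  have hpd : ‖u - p‖ = d := hp.2
  have hquot : ∀ t : ℝ, 0 < t → t ≤ 1 →
      ⟪d⁻¹ • (u - p), h⟫_ℝ - t * (‖h‖ ^ 2 / (2 * d)) ≤
        (infDist (u - t • (u - p) + t ^ 2 • h) S - infDist (u - t • (u - p)) S) / t ^ 2 := by
    intro t ht0 ht1
    have hy : infDist (u - t • (u - p)) S ≤ (1 - t) * d := by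
      refine (infDist_le_dist_of_mem hp.1).trans_eq ?_
      rw [dist_eq_norm, show u - t • (u - p) - p = (1 - t) • (u - p) by module, norm_smul,
        Real.norm_of_nonneg (by linarith), hpd]
    have hyh : d - t * ‖u - p - t • h‖ ≤ infDist (u - t • (u - p) + t ^ 2 • h) S := by
      have := infDist_le_infDist_add_dist (x := u) (y := u - t • (u - p) + t ^ 2 • h) (s := S)
      rw [dist_eq_norm, show u - (u - t • (u - p) + t ^ 2 • h) = t • (u - p - t • h) by module,
        norm_smul, Real.norm_of_nonneg ht0.le] at this
      linarith
    have hupd : u - p ≠ 0 := by rw [← norm_ne_zero_iff, hpd]; exact hd.ne'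
    have hnorm := norm_add_le_inner_add_sq_div hupd (-(t • h))
    rw [← sub_eq_add_neg, hpd, inner_neg_right, inner_smul_right, norm_neg, norm_smul,
      Real.norm_of_nonneg ht0.le, mul_pow, mul_div_assoc] at hnorm
    rw [le_div_iff₀ (by positivity)]
    nlinarith [mul_le_mul_of_nonneg_left hnorm ht0.le]
  have hg : Tendsto (fun t : ℝ => (u - t • (u - p), t ^ 2)) (𝓝[>] 0) (𝓝 u ×ˢ 𝓝[>] 0) := by
    refine Tendsto.prodMk (Tendsto.mono_left ?_ nhdsWithin_le_nhds) ?_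
    · exact (by fun_prop : Continuous fun t : ℝ => u - t • (u - p)).tendsto' 0 u (by simp)
    · refine tendsto_nhdsWithin_iff.2 ⟨?_, ?_⟩
      · exact ((continuous_pow 2).tendsto' (0 : ℝ) 0 (by simp)).mono_left nhdsWithin_le_nhds
      · filter_upwards [self_mem_nhdsWithin] with t (ht : 0 < t) using pow_pos ht 2
  have hb : Tendsto (fun t : ℝ => ⟪d⁻¹ • (u - p), h⟫_ℝ - t * (‖h‖ ^ 2 / (2 * d))) (𝓝[>] 0)
      (𝓝 ⟪d⁻¹ • (u - p), h⟫_ℝ) :=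
    ((by fun_prop : Continuous fun t : ℝ => ⟪d⁻¹ • (u - p), h⟫_ℝ - t * (‖h‖ ^ 2 / (2 * d)))
      |>.tendsto' 0 _ (by simp)).mono_left nhdsWithin_le_nhds
  refine (lipschitz_infDist_pt S).le_clarkeDeriv_of_tendsto hg hb ?_
  filter_upwards [Ioc_mem_nhdsGT one_pos] with t ht using hquot t ht.1 ht.2

theorem infDist_quotient_le_inner_of_mem_projSet {S : Set H} {y s : H} (hs : s ∈ projSet S y)
    (h : H) {τ : ℝ} (hτ : 0 < τ) :
    (infDist (y + τ • h) S - infDist y S) / τ ≤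
      ⟪‖y + τ • h - s‖⁻¹ • (y + τ • h - s), h⟫_ℝ := by
  rw [div_le_iff₀ hτ, ← hs.2]
  calc infDist (y + τ • h) S - ‖y - s‖ ≤ ‖y + τ • h - s‖ - ‖y - s‖ := by
        gcongr; rw [← dist_eq_norm]; exact infDist_le_dist_of_mem hs.1
    _ ≤ ⟪‖y + τ • h - s‖⁻¹ • (y + τ • h - s), y + τ • h - s - (y - s)⟫_ℝ :=
        norm_sub_norm_le_inner _ _
    _ = ⟪‖y + τ • h - s‖⁻¹ • (y + τ • h - s), h⟫_ℝ * τ := by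
        rw [show y + τ • h - s - (y - s) = τ • h by abel, real_inner_smul_right, mul_comm]

theorem dist_le_infDist_add_of_mem_projSet {E : Type} [NormedAddCommGroup E] {S : Set E}
    {y s : E} (hs : s ∈ projSet S y) (u : E) : dist s u ≤ infDist u S + 2 * dist y u := by
  have hys : dist y s = infDist y S := by rw [dist_eq_norm]; exact hs.2
  have : infDist y S ≤ infDist u S + dist y u := infDist_le_infDist_add_dist
  linarith [dist_triangle s y u, dist_comm s y]

theorem clarkeDeriv_infDist_le {S : Set H}
    (hS : ∀ (x : H) (r : ℝ), IsCompact (S ∩ closedBall x r)) {u : H} (hd : 0 < infDist u S)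
    {h : H} {c : ℝ} (hc : ∀ p ∈ projSet S u, ⟪(infDist u S)⁻¹ • (u - p), h⟫_ℝ < c) :
    clarkeDeriv (infDist · S) u h ≤ c := by
  set d := infDist u S
  have hne : S.Nonempty := nonempty_iff_ne_empty.2 fun hempty => by simp [d, hempty] at hd
  set g : H → ℝ := fun a => ⟪‖a‖⁻¹ • a, h⟫_ℝ
  -- Tube lemma over the compact `S ∩ closedBall u (d + 2)`: a point `s ∉ Proj_S(u)` is not a
  -- projection of any point near `u`, and near a projection of `u` `g` is continuous and `< c`.
  have hloc : ∀ᶠ z : H × ℝ in 𝓝 (u, 0), ∀ s ∈ S ∩ closedBall u (d + 2),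
      ‖z.1 - s‖ ≤ infDist z.1 S → g (z.1 + z.2 • h - s) < c := by
    refine (hS u (d + 2)).eventually_forall_of_forall_eventually fun s hs => ?_
    rcases (infDist_le_dist_of_mem hs.1 (x := u)).eq_or_lt with hus | hus
    · have hus' : ‖u - s‖ = d := by rw [← dist_eq_norm, ← hus]
      have hcont : ContinuousAt (fun q : (H × ℝ) × H => g (q.1.1 + q.1.2 • h - q.2))
          ((u, 0), s) := by
        have hne0 : u + (0 : ℝ) • h - s ≠ 0 := by
          rw [zero_smul, add_zero, ← norm_ne_zero_iff, hus']; exact hd.ne'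
        simp only [g]
        fun_prop (disch := simpa using hne0)
      have hlt : g (u + (0 : ℝ) • h - s) < c := by
        simpa [g, hus'] using hc s ⟨hs.1, hus'⟩
      filter_upwards [hcont.eventually (gt_mem_nhds hlt)] with q hq _ using hq
    · have hcont : ContinuousAt (fun q : (H × ℝ) × H => ‖q.1.1 - q.2‖ - infDist q.1.1 S)
          ((u, 0), s) := by fun_prop
      have hpos : 0 < ‖u - s‖ - infDist u S := by rw [← dist_eq_norm]; linarith
      filter_upwards [hcont.eventually (lt_mem_nhds hpos)] with q hq hq'
      exact absurd hq' (by linarith)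
  have hnear : ∀ᶠ z : H × ℝ in 𝓝 u ×ˢ 𝓝[>] 0, dist z.1 u < 1 ∧ 0 < z.2 :=
    prod_mem_prod (ball_mem_nhds u one_pos) self_mem_nhdsWithin
  refine (lipschitz_infDist_pt S).clarkeDeriv_le_of_eventually_le ?_
  filter_upwards [hnear, (Filter.prod_mono le_rfl nhdsWithin_le_nhds).trans nhds_prod_eq.ge hloc]
    with z hz hzloc
  obtain ⟨s, hs⟩ := exists_mem_projSet hS hne z.1
  have hsu : dist s u ≤ d + 2 := by
    linarith [dist_le_infDist_add_of_mem_projSet hs u, hz.1]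
  exact (infDist_quotient_le_inner_of_mem_projSet hs h hz.2).trans
    (hzloc s ⟨hs.1, hsu⟩ hs.2.le).le

theorem Convex.mem_of_forall_inner_lt_imp_le [CompleteSpace H] {C : Set H} (hC : Convex ℝ C)
    (hCc : IsClosed C) {v : H} (hv : ∀ (h : H) (c : ℝ), (∀ p ∈ C, ⟪p, h⟫_ℝ < c) → ⟪v, h⟫_ℝ ≤ c) :
    v ∈ C := by
  by_contra hvC
  obtain ⟨f, c, hfC, hfv⟩ := geometric_hahn_banach_closed_point hC hCc hvC
  have hf : ∀ y, ⟪y, (InnerProductSpace.toDual ℝ H).symm f⟫_ℝ = f y := fun y => by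
    rw [real_inner_comm, InnerProductSpace.toDual_symm_apply]
  refine (hv _ c fun p hp => ?_).not_gt ((hf v).symm ▸ hfv)
  exact (hf p).symm ▸ hfC p hp

theorem clarke_subdiff_dist_eq_of_ball_compact_general
    {H : Type} [NormedAddCommGroup H] [InnerProductSpace ℝ H] [CompleteSpace H]
    (S : Set H) (hne : S.Nonempty) (hcl : IsClosed S)
    (hbc : ∀ r : ℝ, 0 < r → IsCompact (S ∩ closedBall (0:H) r))
    (u : H) (hu : u ∉ S) :
    clarkeSubdiff (fun z => infDist z S) u
      = (fun p => (infDist u S)⁻¹ • (u - p)) '' closure (convexHull ℝ (projSet S u)) := by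
  have hd : 0 < infDist u S := (hcl.notMem_iff_infDist_pos hne).1 hu
  have hS := isCompact_inter_closedBall_of_center hbc
  set d := infDist u S
  let T : H →ᵃ[ℝ] H := d⁻¹ • (AffineMap.const ℝ H u - AffineMap.id ℝ H)
  have hT : IsHomeomorph T :=
    ((Homeomorph.subLeft u).trans (Homeomorph.smulOfNeZero d⁻¹ (inv_ne_zero hd.ne'))).isHomeomorph
  change _ = T '' _
  rw [hT.image_closure, T.image_convexHull]
  apply Subset.antisymm
  · intro v hv
    refine (convex_convexHull ℝ _).closure.mem_of_forall_inner_lt_imp_le isClosed_closure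
      fun h c hc => (hv h).trans (clarkeDeriv_infDist_le hS hd fun p hp => ?_)
    exact hc _ (subset_closure (subset_convexHull ℝ _ (mem_image_of_mem T hp)))
  · refine closure_minimal (convexHull_min ?_ (convex_clarkeSubdiff _ _))
      (isClosed_clarkeSubdiff _ _)
    rintro _ ⟨p, hp, rfl⟩ h
    exact inner_le_clarkeDeriv_infDist hd hp h

/-- Lemma 4.2: formula for the Clarke subdifferential of the distance function to a
ball-compact closed set at a point outside the set. -/
theorem clarke_subdiff_dist_eq_of_ball_compact
    {H : Type} [NormedAddCommGroup H] [InnerProductSpace ℝ H] [CompleteSpace H]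
    [TopologicalSpace.SeparableSpace H]
    (S : Set H) (hne : S.Nonempty) (hcl : IsClosed S)
    (hbc : ∀ r : ℝ, 0 < r → IsCompact (S ∩ closedBall (0:H) r))
    (u : H) (hu : u ∉ S) :
    clarkeSubdiff (fun z => infDist z S) u
      = (fun p => (infDist u S)⁻¹ • (u - p)) '' closure (convexHull ℝ (projSet S u)) :=
  clarke_subdiff_dist_eq_of_ball_compact_general S hne hcl hbc u hu

end
end

section
/- Let H be a real separable Hilbert space, I=[0,T] with T>0, S ⊆ H nonempty and closed, and z : I → H differentiable at a point t in the interior of I with derivative ż(t), and suppose z(t) ∉ S. Then the limit lim_{s↓0} [d_S(z(t+s)) − d_S(z(t))]/s exists and equals min_{w ∈ ∂d_S(z(t))} ⟨w, ż(t)⟩, where ∂d_S(z(t)) is the Clarke subdifferential of the distance function d_S at z(t). -/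
open Metric Set MeasureTheory Filter Pointwise

noncomputable section

variable {H : Type} [NormedAddCommGroup H] [InnerProductSpace ℝ H]

open scoped RealInnerProductSpace Topology NNReal

/-!
The Asplund function `φ u = (‖u‖² - d_S(u)²) / 2` is convex, being the supremum of the affine
functions `u ↦ ⟪u, y⟫ - ‖y‖² / 2` over `y ∈ S`. Off `S` we have `d_S = √(‖·‖² - 2 φ) > 0`, so both
the one-sided directional derivative and the Clarke derivative of `d_S` at `x` are read off from
the one-sided directional derivative `φ'(x; ·)` of the convex function:
`d_S'(x; v) = (⟪x, v⟫ - φ'(x; v)) / d_S(x)` and `d_S°(x; h) = (⟪x, h⟫ + φ'(x; -h)) / d_S(x)`, the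
upper bound in the latter because slopes of `φ` to the left of a point lie below those to the
right. Hence `d_S°(x; ·)` is sublinear and `d_S°(x; -v) = -d_S'(x; v)`; by Hahn–Banach and Riesz
some `w ∈ ∂d_S(x)` has `⟪w, v⟫ = -d_S°(x; -v)`, which is the minimum over `∂d_S(x)`. Finally,
since `d_S` is Lipschitz, `z (t + s)` may be replaced by `z t + s • ż(t)`.
-/

theorem limsup_eq_of_eventually_le_of_frequently_ge {α : Type*} {F : Filter α} {u : α → ℝ}
    {C : ℝ} (hle : ∀ ε > 0, ∀ᶠ a in F, u a ≤ C + ε) (hge : ∀ ε > 0, ∃ᶠ a in F, C - ε ≤ u a) :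
    limsup u F = C := by
  have hbdd : IsBoundedUnder (· ≤ ·) F u := isBoundedUnder_of_eventually_le (hle 1 one_pos)
  have hcob : IsCoboundedUnder (· ≤ ·) F u := IsCoboundedUnder.of_frequently_ge (hge 1 one_pos)
  refine le_antisymm (le_of_forall_pos_le_add fun ε hε => limsup_le_of_le hcob (hle ε hε))
    (le_of_forall_pos_le_add fun ε hε => ?_)
  linarith [le_limsup_of_frequently_le (hge ε hε) hbdd]

theorem eventually_div_le_add {α : Type*} {F : Filter α} {N D : α → ℝ} {a c : ℝ} (hc : 0 < c)
    (hD : Tendsto D F (𝓝 c)) (hN : ∀ ε > 0, ∀ᶠ p in F, N p ≤ a + ε) :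
    ∀ ε > 0, ∀ᶠ p in F, N p / D p ≤ a / c + ε := by
  intro ε hε
  have hδ : 0 < ε * c / 2 := by positivity
  have hlim : Tendsto (fun p => (a + ε * c / 2) / D p) F (𝓝 ((a + ε * c / 2) / c)) :=
    tendsto_const_nhds.div hD hc.ne'
  have hval : (a + ε * c / 2) / c + ε / 2 = a / c + ε := by field_simp; ring
  filter_upwards [hN _ hδ, hD.eventually (lt_mem_nhds hc),
    hlim.eventually (gt_mem_nhds (lt_add_of_pos_right _ (half_pos hε)))] with p hNp hDp hlimp
  calc N p / D p ≤ (a + ε * c / 2) / D p := div_le_div_of_nonneg_right hNp hDp.le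
    _ ≤ a / c + ε := by linarith

theorem LipschitzWith.abs_slope_le {E : Type*} [SeminormedAddCommGroup E] [NormedSpace ℝ E]
    {f : E → ℝ} {K : ℝ≥0} (hf : LipschitzWith K f) (y v : E) {t : ℝ} (ht : 0 < t) :
    |(f (y + t • v) - f y) / t| ≤ K * ‖v‖ := by
  have h := hf.dist_le_mul (y + t • v) y
  rw [Real.dist_eq, dist_eq_norm, add_sub_cancel_left, norm_smul, Real.norm_of_nonneg ht.le] at h
  rw [abs_div, abs_of_pos ht, div_le_iff₀ ht]
  linarith

theorem LipschitzWith.tendsto_slope_comp_of_hasDerivAt {E : Type*} [NormedAddCommGroup E]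
    [NormedSpace ℝ E] {f : E → ℝ} {K : ℝ≥0} (hf : LipschitzWith K f) {z : ℝ → E} {z' : E}
    {t L : ℝ} (hz : HasDerivAt z z' t)
    (hL : Tendsto (fun s => (f (z t + s • z') - f (z t)) / s) (𝓝[>] 0) (𝓝 L)) :
    Tendsto (fun s => (f (z (t + s)) - f (z t)) / s) (𝓝[>] 0) (𝓝 L) := by
  have hslope : Tendsto (fun s : ℝ => K * ‖s⁻¹ • (z (t + s) - z t) - z'‖) (𝓝[>] 0) (𝓝 0) := by
    simpa using (tendsto_iff_norm_sub_tendsto_zero.mp hz.tendsto_slope_zero_right).const_mul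
      (K : ℝ)
  have herr : Tendsto (fun s => (f (z (t + s)) - f (z t + s • z')) / s) (𝓝[>] 0) (𝓝 0) := by
    refine squeeze_zero_norm' ?_ hslope
    filter_upwards [self_mem_nhdsWithin] with s (hs : 0 < s)
    have hdiff : s⁻¹ • (z (t + s) - z t) - z' = s⁻¹ • (z (t + s) - (z t + s • z')) := by
      rw [smul_sub, smul_sub, smul_add, smul_smul, inv_mul_cancel₀ hs.ne', one_smul]
      abel
    have h := hf.dist_le_mul (z (t + s)) (z t + s • z')
    rw [Real.dist_eq, dist_eq_norm] at h
    rw [Real.norm_eq_abs, abs_div, abs_of_pos hs, hdiff, norm_smul, norm_inv,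
      Real.norm_of_nonneg hs.le, div_le_iff₀ hs]
    calc |f (z (t + s)) - f (z t + s • z')| ≤ K * ‖z (t + s) - (z t + s • z')‖ := h
      _ = K * (s⁻¹ * ‖z (t + s) - (z t + s • z')‖) * s := by field_simp
  simpa using (hL.add herr).congr fun s => by ring

theorem LipschitzWith.clarkeDeriv_le {f : H → ℝ} {K : ℝ≥0} (hf : LipschitzWith K f) (x h : H) :
    clarkeDeriv f x h ≤ K * ‖h‖ := by
  have hbound : ∀ᶠ p : H × ℝ in 𝓝 x ×ˢ 𝓝[>] 0, |(f (p.1 + p.2 • h) - f p.1) / p.2| ≤ K * ‖h‖ :=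
    (eventually_mem_nhdsWithin.prod_inr _).mono fun p hp => hf.abs_slope_le p.1 h hp
  exact limsup_le_of_le
    (IsCoboundedUnder.of_frequently_ge (hbound.mono fun _ hp => (abs_le.mp hp).1).frequently)
    (hbound.mono fun _ hp => (abs_le.mp hp).2)

theorem frequently_le_slope_neg_of_tendsto {f : H → ℝ} {x v : H} {L : ℝ}
    (hL : Tendsto (fun s => (f (x + s • v) - f x) / s) (𝓝[>] 0) (𝓝 L)) :
    ∀ ε > 0, ∃ᶠ p : H × ℝ in 𝓝 x ×ˢ 𝓝[>] 0, -L - ε ≤ (f (p.1 + p.2 • -v) - f p.1) / p.2 := by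
  intro ε hε
  have hpath : Tendsto (fun s : ℝ => (x + s • v, s)) (𝓝[>] 0) (𝓝 x ×ˢ 𝓝[>] 0) := by
    refine Tendsto.prodMk (tendsto_nhdsWithin_of_tendsto_nhds ?_) tendsto_id
    exact (by fun_prop : Continuous fun s : ℝ => x + s • v).tendsto' 0 x (by simp)
  refine hpath.frequently (Eventually.frequently ?_)
  filter_upwards [hL.eventually (gt_mem_nhds (lt_add_of_pos_right L hε))] with s hs
  rw [smul_neg, add_neg_cancel_right, ← neg_sub (f (x + s • v)), neg_div]
  linarith

theorem exists_linearMap_le_sublinear_apply_eq {E : Type*} [AddCommGroup E] [Module ℝ E]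
    (N : E → ℝ) (N_smul : ∀ c : ℝ, 0 < c → ∀ x, N (c • x) = c * N x)
    (N_add : ∀ x y, N (x + y) ≤ N x + N y) (v : E) :
    ∃ g : E →ₗ[ℝ] ℝ, (∀ x, g x ≤ N x) ∧ g v = -N (-v) := by
  have N_zero : N 0 = 0 := by
    have h := N_smul 2 two_pos 0
    rw [smul_zero] at h
    linarith
  have hwd : ∀ c : ℝ, c • v = 0 → c • -N (-v) = 0 := by
    intro c hc
    rcases smul_eq_zero.mp hc with rfl | rfl
    · exact zero_smul ℝ _
    · rw [neg_zero, N_zero, neg_zero, smul_zero]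
  set f := LinearPMap.mkSpanSingleton' (σ := RingHom.id ℝ) v (-N (-v)) hwd
  have hf : ∀ u : f.domain, f u ≤ N u := by
    rintro ⟨u, hu⟩
    obtain ⟨c, rfl⟩ := Submodule.mem_span_singleton.mp hu
    rw [LinearPMap.mkSpanSingleton'_apply (σ := RingHom.id ℝ) v (-N (-v)) hwd c hu]
    change c * -N (-v) ≤ N (c • v)
    rcases lt_trichotomy c 0 with hc | rfl | hc
    · rw [show c • v = (-c) • -v by rw [neg_smul, smul_neg, neg_neg], N_smul _ (neg_pos.mpr hc)]
      linarith
    · simp [N_zero]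
    · have h := N_add v (-v)
      rw [add_neg_cancel, N_zero] at h
      rw [N_smul c hc]
      nlinarith
  obtain ⟨g, hgf, hgN⟩ := exists_extension_of_le_sublinear f N N_smul N_add hf
  have hv : v ∈ f.domain := Submodule.mem_span_singleton_self v
  refine ⟨g, hgN, ?_⟩
  rw [← LinearPMap.mkSpanSingleton'_apply_self (σ := RingHom.id ℝ) v (-N (-v)) hwd hv]
  exact hgf ⟨v, hv⟩

theorem exists_inner_le_sublinear_inner_eq [CompleteSpace H] (N : H → ℝ)
    (N_smul : ∀ c : ℝ, 0 < c → ∀ x, N (c • x) = c * N x)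
    (N_add : ∀ x y, N (x + y) ≤ N x + N y) {C : ℝ} (N_le : ∀ x, N x ≤ C * ‖x‖) (v : H) :
    ∃ w : H, (∀ x, ⟪w, x⟫ ≤ N x) ∧ ⟪w, v⟫ = -N (-v) := by
  obtain ⟨g, hgN, hgv⟩ := exists_linearMap_le_sublinear_apply_eq N N_smul N_add v
  have hg_bound : ∀ x, ‖g x‖ ≤ C * ‖x‖ := by
    intro x
    refine abs_le.mpr ⟨?_, (hgN x).trans (N_le x)⟩
    have h := (hgN (-x)).trans (N_le (-x))
    rw [map_neg, norm_neg] at h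
    linarith
  let G : StrongDual ℝ H := g.mkContinuous C hg_bound
  refine ⟨(InnerProductSpace.toDual ℝ H).symm G, fun x => ?_, ?_⟩
  · rw [InnerProductSpace.toDual_symm_apply]
    exact hgN x
  · rw [InnerProductSpace.toDual_symm_apply]
    exact hgv

theorem isLeast_inner_clarkeSubdiff [CompleteSpace H] {f : H → ℝ} {x : H}
    (hsmul : ∀ c : ℝ, 0 < c → ∀ h, clarkeDeriv f x (c • h) = c * clarkeDeriv f x h)
    (hadd : ∀ h k, clarkeDeriv f x (h + k) ≤ clarkeDeriv f x h + clarkeDeriv f x k)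
    {C : ℝ} (hle : ∀ h, clarkeDeriv f x h ≤ C * ‖h‖) (v : H) :
    IsLeast ((fun w => ⟪w, v⟫) '' clarkeSubdiff f x) (-clarkeDeriv f x (-v)) := by
  refine ⟨?_, ?_⟩
  · obtain ⟨w, hw, hwv⟩ := exists_inner_le_sublinear_inner_eq _ hsmul hadd hle v
    exact ⟨w, hw, hwv⟩
  · rintro _ ⟨w, hw, rfl⟩
    have h := hw (-v)
    rw [inner_neg_right] at h
    exact neg_le.mp h

section RightDirDeriv

variable {E : Type*} [AddCommGroup E] [Module ℝ E] {g : E → ℝ}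

def rightDirDeriv (g : E → ℝ) (x v : E) : ℝ :=
  derivWithin (fun s : ℝ => g (x + s • v)) (Ioi 0) 0

theorem ConvexOn.comp_line (hg : ConvexOn ℝ univ g) (x v : E) :
    ConvexOn ℝ univ (fun s : ℝ => g (x + s • v)) := by
  refine ⟨convex_univ, fun a _ b _ α β hα hβ hαβ => ?_⟩
  have hline : x + (α • a + β • b) • v = α • (x + a • v) + β • (x + b • v) := by
    conv_lhs => rw [← one_smul ℝ x, ← hαβ]
    module
  simpa only [hline] using hg.2 (mem_univ _) (mem_univ _) hα hβ hαβ

theorem ConvexOn.hasDerivWithinAt_rightDirDeriv (hg : ConvexOn ℝ univ g) (x v : E) :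
    HasDerivWithinAt (fun s : ℝ => g (x + s • v)) (rightDirDeriv g x v) (Ioi 0) 0 :=
  (hg.comp_line x v).hasDerivWithinAt_rightDeriv_of_mem_interior (by simp)

theorem ConvexOn.tendsto_slope_rightDirDeriv (hg : ConvexOn ℝ univ g) (x v : E) :
    Tendsto (fun s => (g (x + s • v) - g x) / s) (𝓝[>] 0) (𝓝 (rightDirDeriv g x v)) := by
  have h := (hasDerivWithinAt_iff_tendsto_slope' (by simp)).mp
    (hg.hasDerivWithinAt_rightDirDeriv x v)
  simpa only [slope_fun_def_field, sub_zero, zero_smul, add_zero] using h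

theorem ConvexOn.neg_slope_le_slope_neg (hg : ConvexOn ℝ univ g) (y v : E) {s t : ℝ}
    (hs : 0 < s) (ht : 0 < t) :
    -((g (y + t • v) - g y) / t) ≤ (g (y + s • -v) - g y) / s := by
  have h := (hg.comp_line y v).slope_mono (mem_univ 0) (a := -s) (b := t) (by simp [hs.ne'])
    (by simp [ht.ne']) (by linarith)
  simp only [slope_def_field, sub_zero, zero_smul, add_zero, neg_smul, div_neg] at h
  rw [smul_neg]
  linarith

theorem ConvexOn.rightDirDeriv_smul (hg : ConvexOn ℝ univ g) (x v : E) {c : ℝ} (hc : 0 < c) :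
    rightDirDeriv g x (c • v) = c * rightDirDeriv g x v := by
  have h := HasDerivWithinAt.comp_of_eq 0 (hg.hasDerivWithinAt_rightDirDeriv x v)
    ((hasDerivWithinAt_id 0 (Ioi 0)).const_mul c) (fun s (hs : 0 < s) => mul_pos hc hs)
    (mul_zero c).symm
  have hline :
      (fun s : ℝ => g (x + s • c • v)) = (fun s => g (x + s • v)) ∘ (fun s => c * id s) := by
    ext s
    simp only [Function.comp_apply, id, smul_smul, mul_comm c]
  rw [mul_one, mul_comm] at h
  rw [rightDirDeriv, hline]
  exact h.derivWithin (uniqueDiffWithinAt_Ioi 0)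

theorem ConvexOn.rightDirDeriv_add_le (hg : ConvexOn ℝ univ g) (x v w : E) :
    rightDirDeriv g x (v + w) ≤ rightDirDeriv g x v + rightDirDeriv g x w := by
  have hlim := ((hg.tendsto_slope_rightDirDeriv x ((2 : ℝ) • v)).add
    (hg.tendsto_slope_rightDirDeriv x ((2 : ℝ) • w))).const_mul (1 / 2 : ℝ)
  rw [hg.rightDirDeriv_smul x v two_pos, hg.rightDirDeriv_smul x w two_pos] at hlim
  refine le_of_tendsto_of_tendsto (hg.tendsto_slope_rightDirDeriv x (v + w))
    (by convert hlim using 2; ring) ?_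
  filter_upwards [self_mem_nhdsWithin] with s (hs : 0 < s)
  have hmid : x + s • (v + w)
      = (1 / 2 : ℝ) • (x + s • (2 : ℝ) • v) + (1 / 2 : ℝ) • (x + s • (2 : ℝ) • w) := by
    module
  have h := hg.2 (mem_univ (x + s • (2 : ℝ) • v)) (mem_univ (x + s • (2 : ℝ) • w))
    (by norm_num : (0 : ℝ) ≤ 1 / 2) (by norm_num : (0 : ℝ) ≤ 1 / 2) (by norm_num)
  rw [← hmid, smul_eq_mul, smul_eq_mul] at h
  rw [← add_div, mul_div_assoc', div_le_div_iff_of_pos_right hs]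
  linarith

theorem ConvexOn.eventually_neg_slope_le [TopologicalSpace E] [IsTopologicalAddGroup E]
    [ContinuousSMul ℝ E] (hg : ConvexOn ℝ univ g) (hcont : Continuous g) (x v : E) :
    ∀ ε > 0, ∀ᶠ p : E × ℝ in 𝓝 x ×ˢ 𝓝[>] 0,
      -((g (p.1 + p.2 • v) - g p.1) / p.2) ≤ rightDirDeriv g x (-v) + ε := by
  intro ε hε
  obtain ⟨s, hs, hslope⟩ : ∃ s : ℝ, 0 < s ∧
      (g (x + s • -v) - g x) / s < rightDirDeriv g x (-v) + ε / 2 :=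
    (eventually_mem_nhdsWithin.and ((hg.tendsto_slope_rightDirDeriv x (-v)).eventually
      (gt_mem_nhds (lt_add_of_pos_right _ (half_pos hε))))).exists
  have hnear : ∀ᶠ y in 𝓝 x, (g (y + s • -v) - g y) / s < (g (x + s • -v) - g x) / s + ε / 2 := by
    have hc : Continuous fun y => (g (y + s • -v) - g y) / s := by fun_prop
    exact hc.continuousAt.eventually (gt_mem_nhds (lt_add_of_pos_right _ (half_pos hε)))
  filter_upwards [hnear.prod_inl _, eventually_mem_nhdsWithin.prod_inr _] with p hp (ht : 0 < p.2)
  linarith [hg.neg_slope_le_slope_neg p.1 v hs ht]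

end RightDirDeriv

def asplund (S : Set H) (u : H) : ℝ := (‖u‖ ^ 2 - infDist u S ^ 2) / 2

section Asplund

variable {S : Set H}

theorem inner_sub_half_norm_sq_le_asplund {y : H} (hy : y ∈ S) (u : H) :
    ⟪u, y⟫ - ‖y‖ ^ 2 / 2 ≤ asplund S u := by
  have hd : infDist u S ^ 2 ≤ ‖u - y‖ ^ 2 := by
    rw [← dist_eq_norm]
    exact pow_le_pow_left₀ infDist_nonneg (infDist_le_dist_of_mem hy) 2
  rw [asplund, norm_sub_sq_real] at *
  linarith

theorem exists_asplund_lt (hne : S.Nonempty) (u : H) {ε : ℝ} (hε : 0 < ε) :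
    ∃ y ∈ S, asplund S u < ⟪u, y⟫ - ‖y‖ ^ 2 / 2 + ε := by
  have hlt : infDist u S < √(infDist u S ^ 2 + 2 * ε) :=
    Real.lt_sqrt infDist_nonneg |>.mpr (by linarith)
  obtain ⟨y, hy, hdist⟩ := (infDist_lt_iff hne).mp hlt
  refine ⟨y, hy, ?_⟩
  have hsq : ‖u - y‖ ^ 2 < infDist u S ^ 2 + 2 * ε := by
    rw [← dist_eq_norm]
    exact (Real.lt_sqrt dist_nonneg).mp hdist
  rw [asplund, norm_sub_sq_real] at *
  linarith

theorem convexOn_asplund (hne : S.Nonempty) : ConvexOn ℝ univ (asplund S) := by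
  refine ⟨convex_univ, fun a _ b _ α β hα hβ hαβ => le_of_forall_pos_le_add fun ε hε => ?_⟩
  obtain ⟨y, hy, hlt⟩ := exists_asplund_lt hne (α • a + β • b) hε
  have ha := mul_le_mul_of_nonneg_left (inner_sub_half_norm_sq_le_asplund hy a) hα
  have hb := mul_le_mul_of_nonneg_left (inner_sub_half_norm_sq_le_asplund hy b) hβ
  have hsplit : ⟪α • a + β • b, y⟫ - ‖y‖ ^ 2 / 2
      = α * (⟪a, y⟫ - ‖y‖ ^ 2 / 2) + β * (⟪b, y⟫ - ‖y‖ ^ 2 / 2) := by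
    rw [inner_add_left, real_inner_smul_left, real_inner_smul_left]
    linear_combination (‖y‖ ^ 2 / 2) * hαβ
  rw [smul_eq_mul, smul_eq_mul]
  linarith

theorem infDist_slope_eq (y v : H) {t : ℝ} (ht : t ≠ 0)
    (hD : infDist (y + t • v) S + infDist y S ≠ 0) :
    (infDist (y + t • v) S - infDist y S) / t
      = (⟪y, v⟫ + t * ‖v‖ ^ 2 / 2 - (asplund S (y + t • v) - asplund S y) / t)
        / ((infDist (y + t • v) S + infDist y S) / 2) := by
  have hnorm : ‖y + t • v‖ ^ 2 = ‖y‖ ^ 2 + 2 * t * ⟪y, v⟫ + t ^ 2 * ‖v‖ ^ 2 := by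
    rw [norm_add_sq_real, real_inner_smul_right, norm_smul, mul_pow, Real.norm_eq_abs, sq_abs]
    ring
  rw [asplund, asplund, hnorm]
  field_simp
  ring

end Asplund

section InfDist

variable {S : Set H} {x : H}

theorem tendsto_infDist_slope (hne : S.Nonempty) (hcl : IsClosed S) (hx : x ∉ S) (v : H) :
    Tendsto (fun s => (infDist (x + s • v) S - infDist x S) / s) (𝓝[>] 0)
      (𝓝 ((⟪x, v⟫ - rightDirDeriv (asplund S) x v) / infDist x S)) := by
  have hdx : 0 < infDist x S := (hcl.notMem_iff_infDist_pos hne).mp hx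
  have hquad : Tendsto (fun s : ℝ => ⟪x, v⟫ + s * ‖v‖ ^ 2 / 2) (𝓝[>] 0) (𝓝 ⟪x, v⟫) :=
    ((by fun_prop : Continuous fun s : ℝ => ⟪x, v⟫ + s * ‖v‖ ^ 2 / 2).tendsto' 0 _
      (by simp)).mono_left nhdsWithin_le_nhds
  have hmean : Tendsto (fun s : ℝ => (infDist (x + s • v) S + infDist x S) / 2) (𝓝[>] 0)
      (𝓝 (infDist x S)) :=
    ((by fun_prop : Continuous fun s : ℝ => (infDist (x + s • v) S + infDist x S) / 2).tendsto'
      0 _ (by simp)).mono_left nhdsWithin_le_nhds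
  refine ((hquad.sub ((convexOn_asplund hne).tendsto_slope_rightDirDeriv x v)).div hmean
    hdx.ne').congr' ?_
  filter_upwards [self_mem_nhdsWithin] with s (hs : 0 < s)
  exact (infDist_slope_eq x v hs.ne' (add_pos_of_nonneg_of_pos infDist_nonneg hdx).ne').symm

theorem eventually_infDist_slope_le (hne : S.Nonempty) (hcl : IsClosed S) (hx : x ∉ S) (h : H) :
    ∀ ε > 0, ∀ᶠ p : H × ℝ in 𝓝 x ×ˢ 𝓝[>] 0, (infDist (p.1 + p.2 • h) S - infDist p.1 S) / p.2
      ≤ (⟪x, h⟫ + rightDirDeriv (asplund S) x (-h)) / infDist x S + ε := by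
  have hdx : 0 < infDist x S := (hcl.notMem_iff_infDist_pos hne).mp hx
  have hcont : Continuous (asplund S) :=
    ((continuous_norm.pow 2).sub ((continuous_infDist_pt S).pow 2)).div_const 2
  have hnhds : 𝓝 x ×ˢ 𝓝[>] (0 : ℝ) ≤ 𝓝 (x, 0) := by
    rw [nhds_prod_eq]
    exact prod_mono le_rfl nhdsWithin_le_nhds
  have hquad : Tendsto (fun p : H × ℝ => ⟪p.1, h⟫ + p.2 * ‖h‖ ^ 2 / 2) (𝓝 x ×ˢ 𝓝[>] 0)
      (𝓝 ⟪x, h⟫) :=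
    ((by fun_prop : Continuous fun p : H × ℝ => ⟪p.1, h⟫ + p.2 * ‖h‖ ^ 2 / 2).tendsto' _ _
      (by simp)).mono_left hnhds
  have hmean : Tendsto (fun p : H × ℝ => (infDist (p.1 + p.2 • h) S + infDist p.1 S) / 2)
      (𝓝 x ×ˢ 𝓝[>] 0) (𝓝 (infDist x S)) :=
    ((by fun_prop : Continuous fun p : H × ℝ =>
      (infDist (p.1 + p.2 • h) S + infDist p.1 S) / 2).tendsto' _ _ (by simp)).mono_left hnhds
  have hnum : ∀ ε > 0, ∀ᶠ p : H × ℝ in 𝓝 x ×ˢ 𝓝[>] 0,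
      ⟪p.1, h⟫ + p.2 * ‖h‖ ^ 2 / 2 - (asplund S (p.1 + p.2 • h) - asplund S p.1) / p.2
        ≤ ⟪x, h⟫ + rightDirDeriv (asplund S) x (-h) + ε := by
    intro ε hε
    filter_upwards [hquad.eventually (gt_mem_nhds (lt_add_of_pos_right _ (half_pos hε))),
      (convexOn_asplund hne).eventually_neg_slope_le hcont x h _ (half_pos hε)] with p hp hq
    linarith
  intro ε hε
  filter_upwards [eventually_div_le_add hdx hmean hnum ε hε, hmean.eventually (lt_mem_nhds hdx),
    eventually_mem_nhdsWithin.prod_inr _] with p hp hDp (htp : 0 < p.2)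
  rwa [infDist_slope_eq p.1 h htp.ne' (by linarith)]

theorem clarkeDeriv_infDist (hne : S.Nonempty) (hcl : IsClosed S) (hx : x ∉ S) (h : H) :
    clarkeDeriv (fun u => infDist u S) x h
      = (⟪x, h⟫ + rightDirDeriv (asplund S) x (-h)) / infDist x S := by
  refine limsup_eq_of_eventually_le_of_frequently_ge (eventually_infDist_slope_le hne hcl hx h)
    fun ε hε => ?_
  have hlow := frequently_le_slope_neg_of_tendsto (f := fun u => infDist u S)
    (tendsto_infDist_slope hne hcl hx (-h)) ε hε
  rw [neg_neg, inner_neg_right] at hlow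
  convert hlow using 3
  ring

theorem isLeast_inner_clarkeSubdiff_infDist [CompleteSpace H] (hne : S.Nonempty)
    (hcl : IsClosed S) (hx : x ∉ S) (v : H) :
    IsLeast ((fun w => ⟪w, v⟫) '' clarkeSubdiff (fun u => infDist u S) x)
      ((⟪x, v⟫ - rightDirDeriv (asplund S) x v) / infDist x S) := by
  have hφ := convexOn_asplund hne
  have hformula := clarkeDeriv_infDist hne hcl hx
  convert isLeast_inner_clarkeSubdiff (fun c hc h => ?_) (fun h k => ?_)
    ((lipschitz_infDist_pt S).clarkeDeriv_le x) v using 1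
  · rw [hformula, neg_neg, inner_neg_right]
    ring
  · rw [hformula, hformula, inner_smul_right, ← smul_neg, hφ.rightDirDeriv_smul x _ hc]
    ring
  · rw [hformula, hformula, hformula, neg_add, inner_add_right, ← add_div]
    have hsub := hφ.rightDirDeriv_add_le x (-h) (-k)
    exact div_le_div_of_nonneg_right (by linarith) infDist_nonneg

end InfDist

theorem right_deriv_dist_eq_min_inner_general
    {H : Type} [NormedAddCommGroup H] [InnerProductSpace ℝ H] [CompleteSpace H]
    (S : Set H) (hne : S.Nonempty) (hcl : IsClosed S)
    (z : ℝ → H) (t : ℝ)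
    (z' : H) (hz : HasDerivAt z z' t) (hout : z t ∉ S) :
    Filter.Tendsto
        (fun s : ℝ => (infDist (z (t + s)) S - infDist (z t) S) / s)
        (nhdsWithin 0 (Ioi (0:ℝ)))
        (nhds (sInf ((fun w : H => (inner ℝ w z' : ℝ)) ''
          clarkeSubdiff (fun u => infDist u S) (z t)))) := by
  rw [(isLeast_inner_clarkeSubdiff_infDist hne hcl hout z').csInf_eq]
  exact (lipschitz_infDist_pt S).tendsto_slope_comp_of_hasDerivAt hz
    (tendsto_infDist_slope hne hcl hout z')

/-- Lemma 4.4(iv): if `z(t) ∉ S`, the right derivative of `t ↦ d_S(z(t))` exists and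
equals the minimum of `⟨w, ż(t)⟩` over the Clarke subdifferential `∂d_S(z(t))`. -/
theorem right_deriv_dist_eq_min_inner
    {H : Type} [NormedAddCommGroup H] [InnerProductSpace ℝ H] [CompleteSpace H]
    [TopologicalSpace.SeparableSpace H]
    (T : ℝ) (hT : 0 < T)
    (S : Set H) (hne : S.Nonempty) (hcl : IsClosed S)
    (z : ℝ → H) (t : ℝ) (ht : t ∈ Ioo (0:ℝ) T)
    (z' : H) (hz : HasDerivAt z z' t) (hout : z t ∉ S) :
    Filter.Tendsto
        (fun s : ℝ => (infDist (z (t + s)) S - infDist (z t) S) / s)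
        (nhdsWithin 0 (Ioi (0:ℝ)))
        (nhds (sInf ((fun w : H => (inner ℝ w z' : ℝ)) ''
          clarkeSubdiff (fun u => infDist u S) (z t)))) :=
  right_deriv_dist_eq_min_inner_general S hne hcl z t z' hz hout

end
end

section
/- Let H be a real separable Hilbert space and let S ⊆ H be a nonempty closed uniformly subsmooth set with S ≠ H. Then for every ε ∈ (0,1) there exists ρ ∈ (0,∞) such that √(1−ε) ≤ inf_{y ∈ U_ρ(S)} d(0, ∂d_S(y)), where U_ρ(S) := {x ∈ H : 0 < d_S(x) < ρ} and ∂d_S(y) is the Clarke subdifferential of the distance function d_S at y. -/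
open Metric Set MeasureTheory Filter Pointwise

noncomputable section

variable {H : Type} [NormedAddCommGroup H] [InnerProductSpace ℝ H]

/-- A closed set is uniformly subsmooth. -/
def UniformlySubsmooth {H : Type} [NormedAddCommGroup H] [InnerProductSpace ℝ H]
    (S : Set H) : Prop :=
  ∀ ε > (0:ℝ), ∃ δ > (0:ℝ), ∀ x₁ ∈ S, ∀ x₂ ∈ S, ‖x₁ - x₂‖ < δ →
    ∀ v₁ ∈ clarkeNormalCone S x₁ ∩ closedBall 0 1,
    ∀ v₂ ∈ clarkeNormalCone S x₂ ∩ closedBall 0 1,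
      -ε * ‖x₁ - x₂‖ ≤ (inner ℝ (v₁ - v₂) (x₁ - x₂) : ℝ)

/-
Ekeland's principle stands in for nearest points: for `y ∉ S` and small `σ > 0` there is `p ∈ S`
with `‖y - p‖ ≤ ‖y - w‖ + σ ‖w - p‖` on `S`, and at such `p` the unit vector `u` from `p` towards
`y` is within `2√σ` of a Clarke subgradient of `d_S`, hence of a Clarke normal. For two such
pairs `(y, p)`, `(z, q)` close to each other, uniform subsmoothness turns the monotonicity defect
of the normals into the statement that the unit vectors `u_p` and `u_q` are almost equal. Moving
any `z` near `y` by `t` in the direction `-u_p` therefore decreases `d_S` by almost `t`, so the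
Clarke derivative of `d_S` at `y` in the direction `-u_p` is close to `-1`, and every Clarke
subgradient at `y` has norm at least `1 - ε/2 ≥ √(1 - ε)`.
-/

open scoped Topology NNReal
open NormedSpace

local notation "⟪" x ", " y "⟫" => @inner ℝ _ _ x y

section Ekeland

variable {X : Type*} [MetricSpace X]

def ekelandSet (g : X → ℝ) (σ : ℝ) (q : X) : Set X :=
  {u | g u + σ * dist u q ≤ g q}

variable {g : X → ℝ} {σ : ℝ}

lemma mem_ekelandSet {q u : X} : u ∈ ekelandSet g σ q ↔ g u + σ * dist u q ≤ g q := Iff.rfl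

lemma mem_ekelandSet_self (q : X) : q ∈ ekelandSet g σ q := by
  simp [ekelandSet]

lemma ekelandSet_subset_of_mem (hσ : 0 ≤ σ) {q u : X} (hu : u ∈ ekelandSet g σ q) :
    ekelandSet g σ u ⊆ ekelandSet g σ q := fun w hw => by
  have := dist_triangle w u q
  simp only [mem_ekelandSet] at hu hw ⊢
  nlinarith

lemma LowerSemicontinuous.isClosed_ekelandSet (hg : LowerSemicontinuous g) (q : X) :
    IsClosed (ekelandSet g σ q) :=
  (hg.add (continuous_const.mul (continuous_id.dist continuous_const)).lowerSemicontinuous)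
    |>.isClosed_preimage (g q)

lemma ekelandSet_subset_closedBall (hσ : 0 < σ) {q q' : X} {η : ℝ}
    (hq' : q' ∈ ekelandSet g σ q) (hmin : ∀ u ∈ ekelandSet g σ q, g q' ≤ g u + η) :
    ekelandSet g σ q' ⊆ closedBall q' (η / σ) := fun u hu => by
  have hle := hmin u (ekelandSet_subset_of_mem hσ.le hq' hu)
  rw [mem_closedBall, le_div_iff₀ hσ]
  simp only [mem_ekelandSet] at hu
  linarith

lemma exists_almost_min_ekelandSet (hbdd : BddBelow (range g)) (q : X) {η : ℝ} (hη : 0 < η) :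
    ∃ q' ∈ ekelandSet g σ q, ∀ u ∈ ekelandSet g σ q, g q' ≤ g u + η := by
  have hne : (g '' ekelandSet g σ q).Nonempty := ⟨g q, mem_image_of_mem g (mem_ekelandSet_self q)⟩
  obtain ⟨_, ⟨q', hq', rfl⟩, hlt⟩ := Real.lt_sInf_add_pos hne hη
  refine ⟨q', hq', fun u hu => hlt.le.trans ?_⟩
  gcongr
  exact csInf_le (hbdd.mono (image_subset_range _ _)) (mem_image_of_mem g hu)

/-- Ekeland's variational principle. -/
theorem LowerSemicontinuous.exists_le_forall_le_add_mul_dist [CompleteSpace X]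
    (hg : LowerSemicontinuous g) (hbdd : BddBelow (range g)) (hσ : 0 < σ) (x₀ : X) :
    ∃ q, g q ≤ g x₀ ∧ ∀ u, g q ≤ g u + σ * dist u q := by
  choose next hnext hnext_min using fun (n : ℕ) (q : X) =>
    exists_almost_min_ekelandSet (σ := σ) hbdd q (Nat.one_div_pos_of_nat (n := n))
  let q : ℕ → X := fun n => Nat.rec x₀ next n
  let s : ℕ → Set X := fun n => ekelandSet g σ (q (n + 1))
  have hs_ball n : s n ⊆ closedBall (q (n + 1)) (1 / (n + 1) / σ) :=
    ekelandSet_subset_closedBall hσ (hnext n (q n)) (hnext_min n (q n))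
  have hs_anti : Antitone s :=
    antitone_nat_of_succ_le fun n => ekelandSet_subset_of_mem hσ.le (hnext (n + 1) (q (n + 1)))
  have hdiam : Tendsto (fun n => diam (s n)) atTop (𝓝 0) := by
    have hlim : Tendsto (fun n : ℕ => 2 * (1 / ((n : ℝ) + 1) / σ)) atTop (𝓝 0) := by
      simpa using (tendsto_one_div_add_atTop_nhds_zero_nat.div_const σ).const_mul 2
    refine squeeze_zero (fun n => diam_nonneg) (fun n => ?_) hlim
    exact diam_le_of_subset_closedBall (by positivity) (hs_ball n)
  obtain ⟨q₀, hq₀⟩ := nonempty_iInter_of_nonempty_biInter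
    (fun n => hg.isClosed_ekelandSet _)
    (fun n => isBounded_closedBall.subset (hs_ball n))
    (fun N => ⟨q (N + 1), mem_iInter₂.2 fun n hn => hs_anti hn (mem_ekelandSet_self _)⟩) hdiam
  rw [mem_iInter] at hq₀
  refine ⟨q₀, ?_, fun u => ?_⟩
  · have h := ekelandSet_subset_of_mem hσ.le (hnext 0 x₀) (hq₀ 0)
    simp only [mem_ekelandSet] at h
    nlinarith [dist_nonneg (x := q₀) (y := x₀)]
  · by_contra! hlt
    have hu n : u ∈ s n := ekelandSet_subset_of_mem hσ.le (hq₀ n) hlt.le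
    have hdist : dist u q₀ ≤ 0 := ge_of_tendsto' hdiam fun n =>
      dist_le_diam_of_mem (isBounded_closedBall.subset (hs_ball n)) (hu n) (hq₀ n)
    rw [dist_le_zero.1 hdist, dist_self] at hlt
    linarith

end Ekeland

/-- What Ekeland's principle provides in place of a nearest point of `z` in `S`, which need not
exist. -/
def IsEkelandProj {E : Type*} [NormedAddCommGroup E] (S : Set E) (σ : ℝ) (z q : E) : Prop :=
  q ∈ S ∧ ∀ w ∈ S, ‖z - q‖ ≤ ‖z - w‖ + σ * ‖w - q‖

lemma exists_isEkelandProj {E : Type*} [NormedAddCommGroup E] [CompleteSpace E] {S : Set E}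
    {σ : ℝ} (hcl : IsClosed S) (hne : S.Nonempty) (z : E)
    (hσ : 0 < σ) {γ : ℝ} (hγ : 0 < γ) :
    ∃ q, IsEkelandProj S σ z q ∧ ‖z - q‖ < infDist z S + γ := by
  have : CompleteSpace S := hcl.isComplete.completeSpace_coe
  obtain ⟨x₀, hx₀S, hx₀⟩ := (infDist_lt_iff hne).1 (lt_add_of_pos_right (infDist z S) hγ)
  have hg : Continuous fun w : S => ‖z - w‖ := by fun_prop
  obtain ⟨q, hq₀, hq⟩ := hg.lowerSemicontinuous.exists_le_forall_le_add_mul_dist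
    ⟨0, by rintro _ ⟨w, rfl⟩; exact norm_nonneg _⟩ hσ ⟨x₀, hx₀S⟩
  refine ⟨q, ⟨q.2, fun w hw => ?_⟩, hq₀.trans_lt (by rwa [← dist_eq_norm])⟩
  simpa [Subtype.dist_eq, dist_eq_norm] using hq ⟨w, hw⟩

theorem exists_linearMap_le_eq_of_sublinear {E : Type*} [AddCommGroup E] [Module ℝ E]
    {N : E → ℝ} (N_hom : ∀ c : ℝ, 0 < c → ∀ x, N (c • x) = c * N x)
    (N_add : ∀ x y, N (x + y) ≤ N x + N y) (u : E) :
    ∃ g : E →ₗ[ℝ] ℝ, (∀ x, g x ≤ N x) ∧ g u = N u := by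
  have N_zero : N 0 = 0 := by
    have := N_hom 2 two_pos 0
    rw [smul_zero] at this
    linarith
  let φ : E →ₗ.[ℝ] ℝ := LinearPMap.mkSpanSingleton' u (N u) fun (c : ℝ) hc => by
    rcases smul_eq_zero.1 hc with rfl | rfl
    · exact zero_smul ℝ _
    · rw [N_zero, smul_zero]
  obtain ⟨g, hg_ext, hg_le⟩ := exists_extension_of_le_sublinear φ N N_hom N_add <| by
    rintro ⟨x, hx⟩
    obtain ⟨c, rfl⟩ := Submodule.mem_span_singleton.1 hx
    rw [LinearPMap.mkSpanSingleton'_apply]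
    change c * N u ≤ N (c • u)
    rcases lt_trichotomy c 0 with hc | rfl | hc
    · have hsymm : 0 ≤ N u + N (-u) := by simpa [N_zero] using N_add u (-u)
      rw [← neg_neg c, neg_smul, ← smul_neg, N_hom _ (neg_pos.2 hc)]
      nlinarith
    · simp [N_zero]
    · rw [N_hom c hc]
  refine ⟨g, hg_le, ?_⟩
  rw [hg_ext ⟨u, Submodule.mem_span_singleton_self u⟩]
  exact LinearPMap.mkSpanSingleton'_apply_self (R := ℝ) _ _ _ _

section ClarkeFilter

variable {E : Type*} [TopologicalSpace E]

def clarkeFilter (x : E) : Filter (E × ℝ) :=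
  𝓝 x ×ˢ 𝓝[>] 0

instance (x : E) : (clarkeFilter x).NeBot :=
  Filter.prod_neBot.2 ⟨inferInstance, nhdsGT_neBot 0⟩

lemma eventually_pos_clarkeFilter (x : E) : ∀ᶠ p in clarkeFilter x, 0 < p.2 :=
  Eventually.prod_inr self_mem_nhdsWithin _

lemma tendsto_prodMk_left_clarkeFilter (x : E) :
    Tendsto (fun t : ℝ => (x, t)) (𝓝[>] 0) (clarkeFilter x) :=
  tendsto_const_nhds.prodMk tendsto_id

lemma tendsto_mul_snd_clarkeFilter (x : E) {c : ℝ} (hc : 0 < c) :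
    Tendsto (fun p : E × ℝ => (p.1, c * p.2)) (clarkeFilter x) (clarkeFilter x) := by
  refine tendsto_fst.prodMk (tendsto_nhdsWithin_iff.2 ⟨?_, ?_⟩)
  · have hc : Tendsto (fun t : ℝ => c * t) (𝓝 0) (𝓝 0) :=
      Continuous.tendsto' (by fun_prop) _ _ (by simp)
    exact (hc.comp (tendsto_nhdsWithin_of_tendsto_nhds tendsto_id)).comp tendsto_snd
  · exact (eventually_pos_clarkeFilter x).mono fun p hp => mul_pos hc hp

end ClarkeFilter

section ClarkeQuot

variable {E : Type*} [NormedAddCommGroup E] [NormedSpace ℝ E]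

def clarkeQuot (f : E → ℝ) (h : E) (p : E × ℝ) : ℝ :=
  (f (p.1 + p.2 • h) - f p.1) / p.2

lemma clarkeQuot_add (f : E → ℝ) (h₁ h₂ : E) (p : E × ℝ) :
    clarkeQuot f (h₁ + h₂) p = clarkeQuot f h₁ (p.1 + p.2 • h₂, p.2) + clarkeQuot f h₂ p := by
  simp only [clarkeQuot, smul_add, ← add_assoc, add_right_comm p.1 (p.2 • h₁), ← add_div,
    sub_add_sub_cancel]

lemma clarkeQuot_smul (f : E → ℝ) (h : E) {c : ℝ} (hc : c ≠ 0) (p : E × ℝ) :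
    clarkeQuot f (c • h) p = c * clarkeQuot f h (p.1, c * p.2) := by
  simp only [clarkeQuot, smul_smul, mul_comm p.2 c]
  rw [mul_div_assoc', mul_div_mul_left _ _ hc]

lemma tendsto_add_smul_clarkeFilter (x h : E) :
    Tendsto (fun p : E × ℝ => (p.1 + p.2 • h, p.2)) (clarkeFilter x) (clarkeFilter x) := by
  refine Tendsto.prodMk ?_ tendsto_snd
  have hc : Tendsto (fun p : E × ℝ => p.1 + p.2 • h) (𝓝 (x, 0)) (𝓝 x) :=
    Continuous.tendsto' (by fun_prop) _ _ (by simp)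
  exact hc.mono_left (nhds_prod_eq (x := x) (y := (0 : ℝ)) ▸
    Filter.prod_mono le_rfl nhdsWithin_le_nhds)

lemma LipschitzWith.abs_clarkeQuot_le {f : E → ℝ} {K : ℝ≥0} (hf : LipschitzWith K f) (h : E)
    {p : E × ℝ} (hp : 0 < p.2) : |clarkeQuot f h p| ≤ K * ‖h‖ := by
  have hlip := hf.dist_le_mul (p.1 + p.2 • h) p.1
  rw [Real.dist_eq, dist_eq_norm, add_sub_cancel_left, norm_smul, Real.norm_of_nonneg hp.le] at hlip
  rw [clarkeQuot, abs_div, abs_of_pos hp, div_le_iff₀ hp]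
  linarith

end ClarkeQuot

section ClarkeDeriv

/-! `clarkeDeriv f x h` unfolds to `limsup (clarkeQuot f h) (clarkeFilter x)`. -/

variable {f : H → ℝ} {K : ℝ≥0}

lemma LipschitzWith.eventually_abs_clarkeQuot_le (hf : LipschitzWith K f) (x h : H) :
    ∀ᶠ p in clarkeFilter x, |clarkeQuot f h p| ≤ K * ‖h‖ :=
  (eventually_pos_clarkeFilter x).mono fun _ hp => hf.abs_clarkeQuot_le h hp

lemma LipschitzWith.isBoundedUnder_clarkeQuot (hf : LipschitzWith K f) (x h : H) :
    (clarkeFilter x).IsBoundedUnder (· ≤ ·) (clarkeQuot f h) :=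
  isBoundedUnder_of_eventually_le
    ((hf.eventually_abs_clarkeQuot_le x h).mono fun _ hp => (abs_le.1 hp).2)

lemma LipschitzWith.isCoboundedUnder_clarkeQuot (hf : LipschitzWith K f) (x h : H) :
    (clarkeFilter x).IsCoboundedUnder (· ≤ ·) (clarkeQuot f h) :=
  isCoboundedUnder_le_of_eventually_le _
    ((hf.eventually_abs_clarkeQuot_le x h).mono fun _ hp => (abs_le.1 hp).1)

lemma LipschitzWith.clarkeDeriv_le_iff (hf : LipschitzWith K f) {x h : H} {a : ℝ} :
    clarkeDeriv f x h ≤ a ↔ ∀ b > a, ∀ᶠ p in clarkeFilter x, clarkeQuot f h p < b :=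
  limsup_le_iff (hf.isCoboundedUnder_clarkeQuot x h) (hf.isBoundedUnder_clarkeQuot x h)

lemma LipschitzWith.eventually_clarkeQuot_lt (hf : LipschitzWith K f) {x h : H} {b : ℝ}
    (hb : clarkeDeriv f x h < b) : ∀ᶠ p in clarkeFilter x, clarkeQuot f h p < b :=
  eventually_lt_of_limsup_lt hb (hf.isBoundedUnder_clarkeQuot x h)

lemma LipschitzWith.clarkeDeriv_le_of_eventually (hf : LipschitzWith K f) {x h : H} {a : ℝ}
    (ha : ∀ᶠ p in clarkeFilter x, clarkeQuot f h p ≤ a) : clarkeDeriv f x h ≤ a :=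
  limsup_le_of_le (hf.isCoboundedUnder_clarkeQuot x h) ha

lemma LipschitzWith.le_clarkeDeriv_of_eventually_nhdsGT (hf : LipschitzWith K f) {x h : H}
    {a : ℝ} (ha : ∀ᶠ t in 𝓝[>] 0, a ≤ clarkeQuot f h (x, t)) : a ≤ clarkeDeriv f x h :=
  le_limsup_of_frequently_le ((tendsto_prodMk_left_clarkeFilter x).frequently ha.frequently)
    (hf.isBoundedUnder_clarkeQuot x h)

lemma LipschitzWith.clarkeDeriv_le_mul_norm (hf : LipschitzWith K f) (x h : H) :
    clarkeDeriv f x h ≤ K * ‖h‖ :=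
  hf.clarkeDeriv_le_of_eventually
    ((hf.eventually_abs_clarkeQuot_le x h).mono fun _ hp => (abs_le.1 hp).2)

lemma LipschitzWith.clarkeDeriv_add_le (hf : LipschitzWith K f) (x h₁ h₂ : H) :
    clarkeDeriv f x (h₁ + h₂) ≤ clarkeDeriv f x h₁ + clarkeDeriv f x h₂ := by
  refine hf.clarkeDeriv_le_iff.2 fun b hb => ?_
  set η := (b - (clarkeDeriv f x h₁ + clarkeDeriv f x h₂)) / 2 with hη_def
  have hη : 0 < η := half_pos (sub_pos.2 hb)
  filter_upwards [(tendsto_add_smul_clarkeFilter x h₂).eventually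
      (hf.eventually_clarkeQuot_lt (lt_add_of_pos_right (clarkeDeriv f x h₁) hη)),
    hf.eventually_clarkeQuot_lt (lt_add_of_pos_right (clarkeDeriv f x h₂) hη)] with p hp₁ hp₂
  rw [clarkeQuot_add]
  linarith

lemma LipschitzWith.clarkeDeriv_smul_le (hf : LipschitzWith K f) (x h : H) {c : ℝ} (hc : 0 < c) :
    clarkeDeriv f x (c • h) ≤ c * clarkeDeriv f x h := by
  refine hf.clarkeDeriv_le_iff.2 fun b hb => ?_
  have hb' : clarkeDeriv f x h < b / c := by rwa [lt_div_iff₀' hc]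
  filter_upwards [(tendsto_mul_snd_clarkeFilter x hc).eventually
    (hf.eventually_clarkeQuot_lt hb')] with p hp
  rw [clarkeQuot_smul f h hc.ne']
  rwa [lt_div_iff₀' hc] at hp

lemma LipschitzWith.clarkeDeriv_smul (hf : LipschitzWith K f) (x h : H) {c : ℝ} (hc : 0 < c) :
    clarkeDeriv f x (c • h) = c * clarkeDeriv f x h := by
  refine le_antisymm (hf.clarkeDeriv_smul_le x h hc) ?_
  have := hf.clarkeDeriv_smul_le x (c • h) (inv_pos.2 hc)
  rwa [inv_smul_smul₀ hc.ne', le_inv_mul_iff₀ hc] at this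

end ClarkeDeriv

lemma LipschitzWith.exists_mem_clarkeSubdiff_inner_eq [CompleteSpace H] {f : H → ℝ} {K : ℝ≥0}
    (hf : LipschitzWith K f) (x u : H) :
    ∃ v ∈ clarkeSubdiff f x, ‖v‖ ≤ K ∧ ⟪v, u⟫ = clarkeDeriv f x u := by
  obtain ⟨g, hg_le, hgu⟩ := exists_linearMap_le_eq_of_sublinear
    (fun c hc k => hf.clarkeDeriv_smul x k hc) (hf.clarkeDeriv_add_le x) u
  have hg_bound w : ‖g w‖ ≤ K * ‖w‖ := by
    have h₁ := (hg_le w).trans (hf.clarkeDeriv_le_mul_norm x w)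
    have h₂ := (hg_le (-w)).trans (hf.clarkeDeriv_le_mul_norm x (-w))
    rw [map_neg, norm_neg] at h₂
    exact abs_le.2 ⟨by linarith, h₁⟩
  let G : StrongDual ℝ H := g.mkContinuous K hg_bound
  refine ⟨(InnerProductSpace.toDual ℝ H).symm G, fun k => ?_, ?_, ?_⟩
  · rw [InnerProductSpace.toDual_symm_apply]
    exact hg_le k
  · rw [LinearIsometryEquiv.norm_map]
    exact g.mkContinuous_norm_le K.coe_nonneg hg_bound
  · rw [InnerProductSpace.toDual_symm_apply]
    exact hgu

lemma LipschitzWith.le_infDist_zero_clarkeSubdiff [CompleteSpace H] {f : H → ℝ} {K : ℝ≥0}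
    (hf : LipschitzWith K f) {x w : H} (hw : ‖w‖ = 1) {c : ℝ} (hc : clarkeDeriv f x w ≤ -c) :
    c ≤ infDist 0 (clarkeSubdiff f x) := by
  obtain ⟨v₀, hv₀, -⟩ := hf.exists_mem_clarkeSubdiff_inner_eq x w
  refine (le_infDist ⟨v₀, hv₀⟩).2 fun v hv => ?_
  have hcs := neg_le_of_abs_le (abs_real_inner_le_norm v w)
  rw [hw, mul_one] at hcs
  rw [dist_zero_left]
  linarith [(hv w).trans hc]

lemma inner_sub_sub_two_mul_le {a a' b b' x : H} {η : ℝ} (ha : ‖a - a'‖ ≤ η) (hb : ‖b - b'‖ ≤ η) :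
    ⟪a' - b', x⟫ - 2 * η * ‖x‖ ≤ ⟪a - b, x⟫ := by
  have hsplit : a - b = (a' - b') + ((a - a') - (b - b')) := by abel
  have hn : ‖(a - a') - (b - b')‖ ≤ 2 * η := (norm_sub_le _ _).trans (by linarith)
  have hcs := (abs_real_inner_le_norm ((a - a') - (b - b')) x).trans
    (mul_le_mul_of_nonneg_right hn (norm_nonneg x))
  rw [hsplit, inner_add_left]
  linarith [neg_abs_le ⟪(a - a') - (b - b'), x⟫]

lemma add_mul_norm_sub_sq_le {y z p q a b : H} {α β κ : ℝ} (ha : ‖a‖ = 1) (hb : ‖b‖ = 1)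
    (hα : 0 ≤ α) (hβ : 0 ≤ β) (hyp : α • a = y - p) (hzq : β • b = z - q)
    (h : -κ * ‖p - q‖ ≤ ⟪a - b, p - q⟫) (hκ : 0 ≤ κ) :
    (α + β) * ‖a - b‖ ^ 2 ≤ 2 * ((2 + κ) * ‖y - z‖ + κ * (α + β)) := by
  have hpq : p - q = (y - z) - (α • a - β • b) := by rw [hyp, hzq]; abel
  -- for unit vectors, `‖a - b‖ ^ 2 = 2 - 2 ⟪a, b⟫`
  have hab : ⟪a - b, α • a - β • b⟫ = (α + β) * ‖a - b‖ ^ 2 / 2 := by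
    simp only [norm_sub_sq_real, inner_sub_left, inner_sub_right, real_inner_smul_right,
      real_inner_self_eq_norm_sq, ha, hb, real_inner_comm a b]
    ring
  have hyz : ⟪a - b, y - z⟫ ≤ 2 * ‖y - z‖ := by
    have hn : ‖a - b‖ ≤ 2 := (norm_sub_le a b).trans (by rw [ha, hb]; norm_num)
    nlinarith [real_inner_le_norm (a - b) (y - z), norm_nonneg (y - z)]
  have hnorm : ‖p - q‖ ≤ ‖y - z‖ + (α + β) := by
    rw [hpq]
    refine (norm_sub_le _ _).trans (add_le_add_right ((norm_sub_le _ _).trans_eq ?_) _)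
    rw [norm_smul, norm_smul, ha, hb, Real.norm_of_nonneg hα, Real.norm_of_nonneg hβ, mul_one,
      mul_one]
  rw [hpq, inner_sub_right, hab, ← hpq] at h
  nlinarith [mul_le_mul_of_nonneg_left hnorm hκ]

lemma infDist_sub_smul_le {E : Type*} [NormedAddCommGroup E] [NormedSpace ℝ E] {S : Set E}
    {z q : E} (hq : q ∈ S) (hzq : z ≠ q) {t : ℝ} (ht0 : 0 ≤ t) (htd : t ≤ ‖z - q‖) (w : E) :
    infDist (z - t • w) S ≤ ‖z - q‖ - t + t * ‖w - normalize (z - q)‖ := by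
  set u := normalize (z - q)
  have hu : ‖u‖ = 1 := norm_normalize_eq_one_iff.2 (sub_ne_zero.2 hzq)
  have hsplit : z - t • w - q = (‖z - q‖ - t) • u - t • (w - u) := by
    rw [sub_smul, norm_smul_normalize, smul_sub]; abel
  calc infDist (z - t • w) S ≤ ‖z - t • w - q‖ := by
        rw [← dist_eq_norm]; exact infDist_le_dist_of_mem hq
    _ ≤ ‖(‖z - q‖ - t) • u‖ + ‖t • (w - u)‖ := by rw [hsplit]; exact norm_sub_le _ _
    _ = ‖z - q‖ - t + t * ‖w - u‖ := by
        rw [norm_smul, norm_smul, hu, mul_one, Real.norm_of_nonneg (sub_nonneg.2 htd),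
          Real.norm_of_nonneg ht0]

lemma mem_clarkeNormalCone_of_mem_clarkeSubdiff {S : Set H} {x v : H}
    (hv : v ∈ clarkeSubdiff (fun u => infDist u S) x) : v ∈ clarkeNormalCone S x :=
  show toWeakSpace ℝ H v ∈ closure _ from
    subset_closure (mem_image_of_mem _ ⟨1, v, hv, zero_le_one, (one_smul ℝ v).symm⟩)

section EkelandProj

variable {S : Set H} {σ : ℝ}

lemma IsEkelandProj.le_clarkeDeriv_infDist {z q : H} (hq : IsEkelandProj S σ z q) (hσ : 0 ≤ σ)
    (hzq : z ≠ q) : 1 - 2 * σ ≤ clarkeDeriv (fun u => infDist u S) q (normalize (z - q)) := by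
  set u := normalize (z - q)
  have hu : ‖u‖ = 1 := norm_normalize_eq_one_iff.2 (sub_ne_zero.2 hzq)
  refine (lipschitz_infDist_pt S).le_clarkeDeriv_of_eventually_nhdsGT ?_
  filter_upwards [Ioc_mem_nhdsGT (norm_pos_iff.2 (sub_ne_zero.2 hzq))] with t ⟨ht0, htd⟩
  have hlow : t * (1 - 2 * σ) ≤ infDist (q + t • u) S := by
    refine (le_infDist ⟨q, hq.1⟩).2 fun w hw => ?_
    have hzt : ‖z - (q + t • u)‖ = ‖z - q‖ - t := by
      have : z - (q + t • u) = (‖z - q‖ - t) • u := by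
        rw [sub_smul, norm_smul_normalize]; abel
      rw [this, norm_smul, hu, mul_one, Real.norm_of_nonneg (sub_nonneg.2 htd)]
    have h₁ := hq.2 w hw
    have h₂ : ‖z - w‖ ≤ ‖z - (q + t • u)‖ + dist (q + t • u) w := by
      rw [dist_eq_norm]; exact norm_sub_le_norm_sub_add_norm_sub _ _ _
    have h₃ : ‖w - q‖ ≤ dist (q + t • u) w + t := by
      rw [dist_comm, dist_eq_norm]
      calc ‖w - q‖ = ‖(w - (q + t • u)) + t • u‖ := by congr 1; abel
        _ ≤ ‖w - (q + t • u)‖ + ‖t • u‖ := norm_add_le _ _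
        _ = ‖w - (q + t • u)‖ + t := by rw [norm_smul, hu, mul_one, Real.norm_of_nonneg ht0.le]
    nlinarith [mul_le_mul_of_nonneg_left h₃ hσ, mul_nonneg (mul_nonneg hσ hσ) ht0.le]
  rw [clarkeQuot, infDist_zero_of_mem hq.1, sub_zero, le_div_iff₀ ht0]
  linarith

lemma IsEkelandProj.exists_mem_clarkeSubdiff_norm_sub_sq_le [CompleteSpace H] {z q : H}
    (hq : IsEkelandProj S σ z q) (hσ : 0 ≤ σ) (hzq : z ≠ q) :
    ∃ v ∈ clarkeSubdiff (fun u => infDist u S) q, ‖v‖ ≤ 1 ∧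
      ‖normalize (z - q) - v‖ ^ 2 ≤ 4 * σ := by
  obtain ⟨v, hv, hv1, hvu⟩ :=
    (lipschitz_infDist_pt S).exists_mem_clarkeSubdiff_inner_eq q (normalize (z - q))
  rw [NNReal.coe_one] at hv1
  refine ⟨v, hv, hv1, ?_⟩
  have hlow := hq.le_clarkeDeriv_infDist hσ hzq
  rw [← hvu] at hlow
  rw [norm_sub_sq_real, norm_normalize_eq_one_iff.2 (sub_ne_zero.2 hzq), real_inner_comm]
  nlinarith [norm_nonneg v, mul_le_mul hv1 hv1 (norm_nonneg v) zero_le_one]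

end EkelandProj

/-- `UniformlySubsmooth S` says `∀ ε > 0, ∃ δ > 0, SubsmoothWith S ε δ`. -/
def SubsmoothWith (S : Set H) (ε δ : ℝ) : Prop :=
  ∀ x₁ ∈ S, ∀ x₂ ∈ S, ‖x₁ - x₂‖ < δ →
    ∀ v₁ ∈ clarkeNormalCone S x₁ ∩ closedBall 0 1,
    ∀ v₂ ∈ clarkeNormalCone S x₂ ∩ closedBall 0 1,
      -ε * ‖x₁ - x₂‖ ≤ (inner ℝ (v₁ - v₂) (x₁ - x₂) : ℝ)

section Subsmooth

variable [CompleteSpace H] {S : Set H} {s δ : ℝ}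

lemma SubsmoothWith.norm_normalize_sub_le (hS : SubsmoothWith S s δ) (hs0 : 0 < s)
    (hs1 : s ≤ 1) {y z p q : H} (hp : IsEkelandProj S (s ^ 2) y p)
    (hq : IsEkelandProj S (s ^ 2) z q) (hyp : y ≠ p) (hzq : z ≠ q) (hpq : ‖p - q‖ < δ)
    (hyz : ‖y - z‖ ≤ s * (‖y - p‖ + ‖z - q‖)) :
    ‖normalize (y - p) - normalize (z - q)‖ ≤ √(24 * s) := by
  have norm_le_of_sq_le {x : H} (hx : ‖x‖ ^ 2 ≤ 4 * s ^ 2) : ‖x‖ ≤ 2 * s :=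
    (pow_le_pow_iff_left₀ (norm_nonneg x) (by positivity) two_ne_zero).1 (by linarith)
  obtain ⟨vp, hvp, hvp1, hvp_near⟩ := hp.exists_mem_clarkeSubdiff_norm_sub_sq_le (sq_nonneg s) hyp
  obtain ⟨vq, hvq, hvq1, hvq_near⟩ := hq.exists_mem_clarkeSubdiff_norm_sub_sq_le (sq_nonneg s) hzq
  have hnormal := hS p hp.1 q hq.1 hpq vp
    ⟨mem_clarkeNormalCone_of_mem_clarkeSubdiff hvp, mem_closedBall_zero_iff.2 hvp1⟩ vq
    ⟨mem_clarkeNormalCone_of_mem_clarkeSubdiff hvq, mem_closedBall_zero_iff.2 hvq1⟩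
  have htransfer := inner_sub_sub_two_mul_le (x := p - q)
    (norm_le_of_sq_le hvp_near) (norm_le_of_sq_le hvq_near)
  have hgeom := add_mul_norm_sub_sq_le (κ := 5 * s)
    (norm_normalize_eq_one_iff.2 (sub_ne_zero.2 hyp)) (norm_normalize_eq_one_iff.2 (sub_ne_zero.2 hzq))
    (norm_nonneg _) (norm_nonneg _) (norm_smul_normalize _) (norm_smul_normalize _)
    (by linarith) (by positivity)
  have hpos : 0 < ‖y - p‖ + ‖z - q‖ := by
    have := norm_pos_iff.2 (sub_ne_zero.2 hyp)
    positivity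
  rw [Real.le_sqrt (norm_nonneg _) (by positivity)]
  refine le_of_mul_le_mul_left (hgeom.trans ?_) hpos
  nlinarith [mul_le_mul_of_nonneg_left hyz (by positivity : (0 : ℝ) ≤ 2 + 5 * s),
    mul_nonneg (mul_nonneg hs0.le (sub_nonneg.2 hs1)) hpos.le]

lemma SubsmoothWith.clarkeDeriv_infDist_neg_normalize_le (hS : SubsmoothWith S s δ)
    (hcl : IsClosed S) (hne : S.Nonempty) (hs0 : 0 < s) (hs1 : s ≤ 1) {y p : H}
    (hr : 0 < infDist y S) (hrδ : 4 * infDist y S < δ) (hp : IsEkelandProj S (s ^ 2) y p)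
    (hpy : ‖y - p‖ < 2 * infDist y S) :
    clarkeDeriv (fun u => infDist u S) y (-normalize (y - p)) ≤ -1 + √(24 * s) + s := by
  set r := infDist y S
  have hrp : r ≤ ‖y - p‖ := by rw [← dist_eq_norm]; exact infDist_le_dist_of_mem hp.1
  have hyp : y ≠ p := sub_ne_zero.1 (norm_pos_iff.1 (hr.trans_le hrp))
  set β := s * r / 4 with hβ_def
  have hβ : 0 < β := by positivity
  have hβr : β ≤ r / 4 := by rw [hβ_def]; nlinarith
  refine (lipschitz_infDist_pt S).clarkeDeriv_le_of_eventually ?_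
  filter_upwards [prod_mem_prod (ball_mem_nhds y hβ) (Ioo_mem_nhdsGT hβ)]
    with ⟨z, t⟩ ⟨hz, ht0, htβ⟩
  have hyz : ‖y - z‖ < β := by rw [norm_sub_rev, ← dist_eq_norm]; exact hz
  have hz_lo : r - β ≤ infDist z S := by
    linarith [infDist_le_infDist_add_dist (x := y) (y := z) (s := S), dist_eq_norm y z]
  have hz_hi : infDist z S ≤ r + β := by
    linarith [infDist_le_infDist_add_dist (x := z) (y := y) (s := S), dist_eq_norm z y,
      norm_sub_rev z y]
  obtain ⟨q, hq, hqz⟩ :=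
    exists_isEkelandProj hcl hne z (by positivity : 0 < s ^ 2) (by positivity : 0 < s * t)
  have hzq_lo : infDist z S ≤ ‖z - q‖ := by
    rw [← dist_eq_norm]; exact infDist_le_dist_of_mem hq.1
  have hzq : z ≠ q := sub_ne_zero.1 (norm_pos_iff.1 (by linarith))
  have hpq : ‖p - q‖ < δ := by
    have h₁ := norm_sub_le_norm_sub_add_norm_sub p y q
    have h₂ := norm_sub_le_norm_sub_add_norm_sub y z q
    rw [norm_sub_rev p y] at h₁
    linarith [mul_le_of_le_one_left ht0.le hs1]
  have hyz' : ‖y - z‖ ≤ s * (‖y - p‖ + ‖z - q‖) := by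
    nlinarith [mul_le_mul_of_nonneg_left hrp hs0.le, mul_nonneg hs0.le (norm_nonneg (z - q))]
  have hΔ := hS.norm_normalize_sub_le hs0 hs1 hp hq hyp hzq hpq hyz'
  have hdescent := infDist_sub_smul_le hq.1 hzq ht0.le (by linarith) (normalize (y - p))
  rw [clarkeQuot, div_le_iff₀ ht0, smul_neg, ← sub_eq_add_neg]
  nlinarith [mul_le_mul_of_nonneg_left hΔ ht0.le]

end Subsmooth

theorem uniformly_subsmooth_far_general
    {H : Type} [NormedAddCommGroup H] [InnerProductSpace ℝ H] [CompleteSpace H]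
    (S : Set H) (hne : S.Nonempty) (hcl : IsClosed S)
    (hsub : UniformlySubsmooth S) :
    ∀ ε : ℝ, 0 < ε → ε < 1 → ∃ ρ : ℝ, 0 < ρ ∧
      ∀ y : H, 0 < infDist y S → infDist y S < ρ →
        Real.sqrt (1 - ε) ≤ infDist (0:H) (clarkeSubdiff (fun u => infDist u S) y) := by
  intro ε hε0 hε1
  set s := ε ^ 2 / 400 with hs_def
  have hs0 : 0 < s := by positivity
  have hs1 : s ≤ 1 := by nlinarith
  obtain ⟨δ, hδ, hS⟩ := hsub s hs0
  refine ⟨δ / 4, by positivity, fun y hy hyδ => ?_⟩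
  obtain ⟨p, hp, hpy⟩ := exists_isEkelandProj hcl hne y (by positivity : 0 < s ^ 2) hy
  have hkey := SubsmoothWith.clarkeDeriv_infDist_neg_normalize_le hS hcl hne hs0 hs1 hy
    (by linarith) hp (by linarith)
  have hsqrt_s : √(24 * s) ≤ ε / 4 := Real.sqrt_le_iff.2 ⟨by positivity, by nlinarith⟩
  have hsqrt_ε : √(1 - ε) ≤ 1 - ε / 2 := Real.sqrt_le_iff.2 ⟨by linarith, by nlinarith⟩
  have hyp : y - p ≠ 0 := sub_ne_zero.2 fun h => by
    rw [h, infDist_zero_of_mem hp.1] at hy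
    exact lt_irrefl 0 hy
  refine (lipschitz_infDist_pt S).le_infDist_zero_clarkeSubdiff
    (by rw [norm_neg, norm_normalize_eq_one_iff.2 hyp]) (hkey.trans ?_)
  nlinarith

/-- Proposition 2.1: a uniformly subsmooth set is positively `√(1−ε)`-far for
every `ε ∈ (0,1)`. -/
theorem uniformly_subsmooth_far
    {H : Type} [NormedAddCommGroup H] [InnerProductSpace ℝ H] [CompleteSpace H]
    [TopologicalSpace.SeparableSpace H]
    (S : Set H) (hne : S.Nonempty) (hcl : IsClosed S) (hSne : S ≠ univ)
    (hsub : UniformlySubsmooth S) :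
    ∀ ε : ℝ, 0 < ε → ε < 1 → ∃ ρ : ℝ, 0 < ρ ∧
      ∀ y : H, 0 < infDist y S → infDist y S < ρ →
        Real.sqrt (1 - ε) ≤ infDist (0:H) (clarkeSubdiff (fun u => infDist u S) y) :=
  uniformly_subsmooth_far_general S hne hcl hsub

end
end

section
/- Let H be a real separable Hilbert space, I=[0,T] with T>0, and let C : I ⇉ H be a set-valued map with nonempty closed values. Then the following assertions are equivalent: (a) for every r ≥ 0 there exists κ_r ≥ 0 such that ĥaus_r(C(t),C(s)) ≤ κ_r|t−s| for all s,t ∈ I; (b) for every r ≥ 0 there exists κ_r ≥ 0 such that haus_r(C(t),C(s)) ≤ κ_r|t−s| for all s,t ∈ I. -/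
open Metric Set

noncomputable section

variable {H : Type} [NormedAddCommGroup H] [InnerProductSpace ℝ H]

/-- The `r`-truncated excess of `A` over `B`: `sup_{x ∈ A ∩ r𝔹} d(x,B)`
(with `sup ∅ = 0`). -/
def excTr (r : ℝ) (A B : Set H) : ℝ :=
  sSup ((fun x => infDist x B) '' (A ∩ closedBall (0:H) r))

/-- The `r`-truncated Hausdorff distance. -/
def hausTr (r : ℝ) (A B : Set H) : ℝ :=
  max (excTr r A B) (excTr r B A)

/-- The quantity `ĥaus_r(A,B) = sup_{z ∈ r𝔹} |d(z,A) − d(z,B)|`. -/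
def hhausTr (r : ℝ) (A B : Set H) : ℝ :=
  sSup ((fun z => |infDist z A - infDist z B|) '' closedBall (0:H) r)

lemma bddAbove_exc {r : ℝ} {A B : Set H} (hB : B.Nonempty) :
    BddAbove ((fun x => infDist x B) '' (A ∩ closedBall (0:H) r)) := by
  obtain ⟨b, hb⟩ := hB
  refine ⟨r + ‖b‖, ?_⟩
  rintro _ ⟨x, ⟨hxA, hxr⟩, rfl⟩
  have h1 : infDist x B ≤ dist x b := infDist_le_dist_of_mem hb
  have h2 : dist x b ≤ dist x 0 + dist 0 b := dist_triangle _ _ _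
  have h3 : dist x 0 ≤ r := mem_closedBall.mp hxr
  have h4 : dist (0:H) b = ‖b‖ := by simp
  simp only [] at *
  linarith

lemma abs_infDist_sub_le {A B : Set H} {z : H} {a : H} (ha : a ∈ A) {b : H} (hb : b ∈ B) :
    |infDist z A - infDist z B| ≤ dist z a + dist z b := by
  have h1 : infDist z A ≤ dist z a := infDist_le_dist_of_mem ha
  have h2 : infDist z B ≤ dist z b := infDist_le_dist_of_mem hb
  have h3 : (0:ℝ) ≤ infDist z A := infDist_nonneg
  have h4 : (0:ℝ) ≤ infDist z B := infDist_nonneg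
  rw [abs_sub_le_iff]
  constructor <;> nlinarith [dist_nonneg (x := z) (y := a), dist_nonneg (x := z) (y := b)]

lemma bddAbove_hhaus {r : ℝ} {A B : Set H} (hA : A.Nonempty) (hB : B.Nonempty) :
    BddAbove ((fun z => |infDist z A - infDist z B|) '' closedBall (0:H) r) := by
  obtain ⟨a, ha⟩ := hA
  obtain ⟨b, hb⟩ := hB
  refine ⟨2 * r + ‖a‖ + ‖b‖, ?_⟩
  rintro _ ⟨z, hz, rfl⟩
  have h0 : |infDist z A - infDist z B| ≤ dist z a + dist z b := abs_infDist_sub_le ha hb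
  have h1 : dist z a ≤ dist z 0 + dist 0 a := dist_triangle _ _ _
  have h2 : dist z b ≤ dist z 0 + dist 0 b := dist_triangle _ _ _
  have h3 : dist z 0 ≤ r := mem_closedBall.mp hz
  have h4 : dist (0:H) a = ‖a‖ := by simp
  have h5 : dist (0:H) b = ‖b‖ := by simp
  simp only [] at *
  linarith

lemma hhausTr_nonneg (r : ℝ) (A B : Set H) : 0 ≤ hhausTr r A B := by
  apply Real.sSup_nonneg
  rintro _ ⟨z, hz, rfl⟩
  exact abs_nonneg _

/-- Each truncated excess is bounded by `ĥaus_r`. -/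
lemma excTr_le_hhausTr {r : ℝ} (A B : Set H) (hA : A.Nonempty) (hB : B.Nonempty) :
    excTr r A B ≤ hhausTr r A B := by
  apply Real.sSup_le _ (hhausTr_nonneg r A B)
  rintro _ ⟨x, ⟨hxA, hxr⟩, rfl⟩
  have hx0 : infDist x A = 0 := infDist_zero_of_mem hxA
  have : infDist x B = |infDist x A - infDist x B| := by
    rw [hx0, zero_sub, abs_neg, abs_of_nonneg infDist_nonneg]
  show infDist x B ≤ _
  rw [this]
  exact le_csSup (bddAbove_hhaus hA hB) ⟨x, hxr, rfl⟩

lemma excTr_le_hhausTr' {r : ℝ} (A B : Set H) (hA : A.Nonempty) (hB : B.Nonempty) :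
    excTr r B A ≤ hhausTr r A B := by
  apply Real.sSup_le _ (hhausTr_nonneg r A B)
  rintro _ ⟨x, ⟨hxB, hxr⟩, rfl⟩
  have hx0 : infDist x B = 0 := infDist_zero_of_mem hxB
  have : infDist x A = |infDist x A - infDist x B| := by
    rw [hx0, sub_zero, abs_of_nonneg infDist_nonneg]
  show infDist x A ≤ _
  rw [this]
  exact le_csSup (bddAbove_hhaus hA hB) ⟨x, hxr, rfl⟩

/-- Proposition 2.2: for a moving set with nonempty closed values, Lipschitz
continuity with respect to `ĥaus_r` is equivalent to Lipschitz continuity with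
respect to the truncated Hausdorff distance `haus_r`. -/
theorem truncated_hausdorff_lipschitz_iff
    {H : Type} [NormedAddCommGroup H] [InnerProductSpace ℝ H] [CompleteSpace H]
    [TopologicalSpace.SeparableSpace H]
    (T : ℝ) (hT : 0 < T) (C : ℝ → Set H)
    (hC : ∀ t ∈ Icc (0:ℝ) T, (C t).Nonempty ∧ IsClosed (C t)) :
    (∀ r : ℝ, 0 ≤ r → ∃ κ : ℝ, 0 ≤ κ ∧
        ∀ s ∈ Icc (0:ℝ) T, ∀ t ∈ Icc (0:ℝ) T, hhausTr r (C t) (C s) ≤ κ * |t - s|) ↔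
    (∀ r : ℝ, 0 ≤ r → ∃ κ : ℝ, 0 ≤ κ ∧
        ∀ s ∈ Icc (0:ℝ) T, ∀ t ∈ Icc (0:ℝ) T, hausTr r (C t) (C s) ≤ κ * |t - s|) := by
  constructor
  · -- (a) ⇒ (b)
    intro h r hr
    obtain ⟨κ, hκ, hb⟩ := h r hr
    refine ⟨κ, hκ, fun s hs t ht => ?_⟩
    have hNt := (hC t ht).1
    have hNs := (hC s hs).1
    exact max_le ((excTr_le_hhausTr (C t) (C s) hNt hNs).trans (hb s hs t ht))
      ((excTr_le_hhausTr' (C t) (C s) hNt hNs).trans (hb s hs t ht))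
  · -- (b) ⇒ (a)
    intro h r hr
    have h0 : (0:ℝ) ∈ Icc (0:ℝ) T := ⟨le_rfl, hT.le⟩
    obtain ⟨x₀, hx₀⟩ := (hC 0 h0).1
    -- uniform bound R on infDist 0 (C s)
    obtain ⟨κ₀, hκ₀, hb₀⟩ := h ‖x₀‖ (norm_nonneg _)
    set R : ℝ := ‖x₀‖ + κ₀ * T with hR
    have hRbound : ∀ s ∈ Icc (0:ℝ) T, infDist (0:H) (C s) ≤ R := by
      intro s hs
      have hNs := (hC s hs).1
      have h1 : infDist (0:H) (C s) ≤ infDist x₀ (C s) + dist (0:H) x₀ :=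
        infDist_le_infDist_add_dist
      have h2 : infDist x₀ (C s) ≤ excTr ‖x₀‖ (C 0) (C s) := by
        apply le_csSup (bddAbove_exc hNs)
        exact ⟨x₀, ⟨hx₀, by simp⟩, rfl⟩
      have h3 : excTr ‖x₀‖ (C 0) (C s) ≤ hausTr ‖x₀‖ (C s) (C 0) := le_max_right _ _
      have h4 : hausTr ‖x₀‖ (C s) (C 0) ≤ κ₀ * |s - 0| := hb₀ 0 h0 s hs
      have h5 : |s - 0| ≤ T := by
        rw [sub_zero, abs_of_nonneg hs.1]; exact hs.2
      have h6 : κ₀ * |s - 0| ≤ κ₀ * T := mul_le_mul_of_nonneg_left h5 hκ₀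
      have h7 : dist (0:H) x₀ = ‖x₀‖ := by simp
      linarith
    have hR0 : 0 ≤ R := by
      have := (hRbound 0 h0)
      have := infDist_nonneg (x := (0:H)) (s := C 0)
      linarith
    set ρ : ℝ := 2 * r + R + 1 with hρ
    have hρ0 : 0 ≤ ρ := by positivity
    obtain ⟨κ, hκ, hb⟩ := h ρ hρ0
    refine ⟨κ, hκ, fun s hs t ht => ?_⟩
    apply Real.sSup_le _ (by positivity)
    rintro _ ⟨z, hz, rfl⟩
    have hzr : ‖z‖ ≤ r := by simpa [dist_eq_norm] using mem_closedBall.mp hz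
    -- key one-sided estimate
    have key : ∀ u ∈ Icc (0:ℝ) T, ∀ v ∈ Icc (0:ℝ) T,
        infDist z (C u) ≤ infDist z (C v) + κ * |t - s| → True := fun _ _ _ _ _ => trivial
    have main : ∀ u ∈ Icc (0:ℝ) T, ∀ v ∈ Icc (0:ℝ) T,
        infDist z (C u) - infDist z (C v) ≤ κ * |u - v| := by
      intro u hu v hv
      have hNu := (hC u hu).1
      have hNv := (hC v hv).1
      have hdv : infDist z (C v) ≤ r + R := by
        have h1 : infDist z (C v) ≤ infDist (0:H) (C v) + dist z 0 :=
          infDist_le_infDist_add_dist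
        have h2 : dist z (0:H) = ‖z‖ := by simp
        have := hRbound v hv
        linarith
      rw [sub_le_iff_le_add, add_comm]
      refine le_of_forall_pos_le_add (fun ε hε => ?_)
      set ε' : ℝ := min ε 1 with hε'
      have hε'0 : 0 < ε' := lt_min hε one_pos
      obtain ⟨y, hy, hdy⟩ : ∃ y ∈ C v, dist z y < infDist z (C v) + ε' := by
        rw [← infDist_lt_iff hNv] at *
        · exact lt_add_of_pos_right _ hε'0
      have hyρ : y ∈ closedBall (0:H) ρ := by
        rw [mem_closedBall, dist_comm]
        have : dist y (0:H) ≤ dist y z + dist z 0 := dist_triangle _ _ _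
        have h2 : dist z (0:H) = ‖z‖ := by simp
        have h3 : dist y z = dist z y := dist_comm _ _
        have h4 : ε' ≤ 1 := min_le_right _ _
        rw [dist_comm]
        calc dist y (0:H) ≤ dist y z + dist z 0 := dist_triangle _ _ _
          _ ≤ (infDist z (C v) + ε') + ‖z‖ := by rw [h3, h2]; linarith
          _ ≤ (r + R + 1) + r := by linarith
          _ = ρ := by ring
      have h5 : infDist z (C u) ≤ infDist y (C u) + dist z y :=
        infDist_le_infDist_add_dist
      have h6 : infDist y (C u) ≤ excTr ρ (C v) (C u) :=
        le_csSup (bddAbove_exc hNu) ⟨y, ⟨hy, hyρ⟩, rfl⟩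
      have h7 : excTr ρ (C v) (C u) ≤ κ * |u - v| := by
        have := hb v hv u hu
        exact (le_max_right _ _).trans this
      have h8 : ε' ≤ ε := min_le_left _ _
      linarith
    have h1 := main t ht s hs
    have h2 := main s hs t ht
    rw [abs_sub_le_iff]
    constructor
    · linarith
    · rw [abs_sub_comm] at h2; linarith

end
end

section
/- Let H be a real separable Hilbert space, let A, B ⊆ H be nonempty sets, and let r ≥ 0. Then for every r' ≥ 2r + max{d(0,A), d(0,B)}, one has ĥaus_r(A,B) ≤ haus_{r'}(A,B). -/
open Metric Set

noncomputable section

variable {H : Type} [NormedAddCommGroup H] [InnerProductSpace ℝ H]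

lemma excTr_nonneg (r : ℝ) (A B : Set H) : 0 ≤ excTr r A B := by
  apply Real.sSup_nonneg
  rintro x ⟨y, -, rfl⟩
  exact infDist_nonneg

lemma le_excTr {r : ℝ} {A B : Set H} {a : H} (ha : a ∈ A) (hra : ‖a‖ ≤ r) :
    infDist a B ≤ excTr r A B := by
  apply le_csSup
  · refine ⟨r + infDist 0 B, ?_⟩
    rintro x ⟨y, ⟨-, hy⟩, rfl⟩
    have hy' : ‖y‖ ≤ r := by simpa [mem_closedBall, dist_zero_right] using hy
    calc infDist y B ≤ infDist 0 B + dist y 0 := infDist_le_infDist_add_dist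
      _ ≤ r + infDist 0 B := by rw [dist_zero_right]; linarith
  · exact ⟨a, ⟨ha, by simpa [mem_closedBall, dist_zero_right] using hra⟩, rfl⟩

lemma key_one_sided {A B : Set H} (hB : B.Nonempty) {r r' : ℝ} (hr : 0 ≤ r)
    (hr' : 2 * r + max (infDist (0:H) A) (infDist (0:H) B) ≤ r')
    {z : H} (hz : ‖z‖ ≤ r) :
    infDist z A - infDist z B ≤ hausTr r' A B := by
  have hhaus0 : (0:ℝ) ≤ hausTr r' A B := le_max_of_le_left (excTr_nonneg _ _ _)
  have hmaxA : infDist (0:H) A ≤ max (infDist (0:H) A) (infDist (0:H) B) := le_max_left _ _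
  have hmaxB : infDist (0:H) B ≤ max (infDist (0:H) A) (infDist (0:H) B) := le_max_right _ _
  rw [sub_le_iff_le_add]
  apply le_of_forall_pos_le_add
  intro ε hε
  obtain ⟨b, hbB, hbd⟩ : ∃ b ∈ B, dist z b < infDist z B + ε / 2 := by
    rw [← Metric.infDist_lt_iff hB]; linarith
  by_cases hb : ‖b‖ ≤ r'
  · have h1 : infDist z A ≤ infDist b A + dist z b := infDist_le_infDist_add_dist
    have h2 : infDist b A ≤ excTr r' B A := le_excTr hbB hb
    have h3 : excTr r' B A ≤ hausTr r' A B := le_max_right _ _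
    linarith
  · push_neg at hb
    have hdzB : r' - r - ε / 2 < infDist z B := by
      have h4 : ‖b‖ - ‖z‖ ≤ dist z b := by
        have := norm_sub_norm_le b z
        rw [dist_eq_norm, ← norm_sub_rev]
        linarith
      linarith
    obtain ⟨b₀, hb₀B, hb₀d⟩ : ∃ b₀ ∈ B, dist (0:H) b₀ < infDist (0:H) B + ε / 2 := by
      rw [← Metric.infDist_lt_iff hB]; linarith
    have hb₀norm : ‖b₀‖ < infDist (0:H) B + ε / 2 := by
      rwa [dist_zero_left] at hb₀d
    by_cases hb₀ : ‖b₀‖ ≤ r'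
    · have h1 : infDist z A ≤ infDist b₀ A + dist z b₀ := infDist_le_infDist_add_dist
      have h2 : infDist b₀ A ≤ excTr r' B A := le_excTr hb₀B hb₀
      have h3 : excTr r' B A ≤ hausTr r' A B := le_max_right _ _
      have h4 : dist z b₀ ≤ ‖z‖ + ‖b₀‖ := by
        rw [dist_eq_norm]; exact norm_sub_le _ _
      linarith
    · push_neg at hb₀
      have h1 : infDist z A ≤ infDist (0:H) A + dist z 0 := infDist_le_infDist_add_dist
      rw [dist_zero_right] at h1
      linarith

theorem hausTr_comm (r : ℝ) (A B : Set H) : hausTr r A B = hausTr r B A := by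
  unfold hausTr; exact max_comm _ _

/-- `ĥaus_r(A,B) ≤ haus_{r'}(A,B)` whenever `r' ≥ 2r + max{d(0,A), d(0,B)}`. -/
theorem hhausTr_le_hausTr
    {H : Type} [NormedAddCommGroup H] [InnerProductSpace ℝ H] [CompleteSpace H]
    [TopologicalSpace.SeparableSpace H]
    (A B : Set H) (hA : A.Nonempty) (hB : B.Nonempty) (r : ℝ) (hr : 0 ≤ r) :
    ∀ r' : ℝ, 2 * r + max (infDist (0:H) A) (infDist (0:H) B) ≤ r' →
      hhausTr r A B ≤ hausTr r' A B := by
  intro r' hr'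
  have hhaus0 : (0:ℝ) ≤ hausTr r' A B := le_max_of_le_left (excTr_nonneg _ _ _)
  apply Real.sSup_le _ hhaus0
  rintro x ⟨z, hz, rfl⟩
  have hz' : ‖z‖ ≤ r := by simpa [mem_closedBall, dist_zero_right] using hz
  rw [abs_sub_le_iff]
  constructor
  · exact key_one_sided hB hr hr' hz'
  · rw [hausTr_comm]
    exact key_one_sided hA hr (by rwa [max_comm]) hz'

end
end

section
/- Let H be a real separable Hilbert space, I=[0,T] with T>0, γ ≥ 0 and L ≥ 0. Let ζ : I → H be γ-Lipschitz with ‖ζ(t)‖ = 1 for all t ∈ I, and let β : I × H → ℝ satisfy |β(s,x) − β(t,y)| ≤ γ|t−s| + L‖x−y‖ for all s,t ∈ I and x,y ∈ H. Define the moving half-spaces C(t,x) := {z ∈ H : ⟨ζ(t), z⟩ ≤ β(t,x)}. Then for every r > 0, all s,t ∈ I and all x,y ∈ H, ĥaus_r(C(s,x), C(t,y)) = sup_{z∈r𝔹} |d(z, C(s,x)) − d(z, C(t,y))| ≤ γ(r+1)|t−s| + L‖x−y‖. In particular, C is Lipschitz with respect to the truncated Hausdorff distance. -/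
/-! The distance to the half-space `{w | ⟪ζ, w⟫ ≤ c}` with `‖ζ‖ = 1` is `(⟪ζ, z⟫ - c)⁺`, and
`a ↦ a⁺` is 1-Lipschitz, so on `r𝔹` the two distances differ by at most
`‖ζ s - ζ t‖ r + |β(s,x) - β(t,y)|`. -/

open Metric Set

noncomputable section

variable {H : Type} [NormedAddCommGroup H] [InnerProductSpace ℝ H]

lemma hhausTr_le {E : Type} [NormedAddCommGroup E] {r M : ℝ} {A B : Set E}
    (hr : 0 ≤ r)
    (h : ∀ z ∈ closedBall (0:E) r, |infDist z A - infDist z B| ≤ M) :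
    hhausTr r A B ≤ M :=
  csSup_le ((nonempty_closedBall.2 hr).image _) (forall_mem_image.2 h)

lemma infDist_setOf_inner_le {ζ : H} (hζ : ‖ζ‖ = 1) (c : ℝ) (z : H) :
    infDist z {w : H | inner ℝ ζ w ≤ c} = max (inner ℝ ζ z - c) 0 := by
  set m := max (inner ℝ ζ z - c) 0
  have hm : 0 ≤ m := le_max_right _ _
  -- `z - m • ζ` is the metric projection of `z` onto the half-space
  have hproj : z - m • ζ ∈ {w : H | inner ℝ ζ w ≤ c} := by
    have : inner ℝ ζ (z - m • ζ) = inner ℝ ζ z - m := by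
      rw [inner_sub_right, inner_smul_right, real_inner_self_eq_norm_sq, hζ]; ring
    simp only [mem_ofPred_eq, this]
    linarith [le_max_left (inner ℝ ζ z - c) 0]
  refine le_antisymm ?_ ((le_infDist ⟨_, hproj⟩).2 fun w hw => max_le ?_ dist_nonneg)
  · calc infDist z _ ≤ dist z (z - m • ζ) := infDist_le_dist_of_mem hproj
      _ = m := by simp [norm_smul, hζ, abs_of_nonneg hm]
  · have hw : inner ℝ ζ w ≤ c := hw
    calc inner ℝ ζ z - c ≤ inner ℝ ζ (z - w) := by rw [inner_sub_right]; linarith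
      _ ≤ ‖ζ‖ * ‖z - w‖ := real_inner_le_norm _ _
      _ = dist z w := by rw [hζ, one_mul, dist_eq_norm]

lemma abs_infDist_halfspace_sub_le {ζ₁ ζ₂ : H} (h₁ : ‖ζ₁‖ = 1) (h₂ : ‖ζ₂‖ = 1)
    (c₁ c₂ : ℝ) (z : H) :
    |infDist z {w : H | inner ℝ ζ₁ w ≤ c₁} - infDist z {w : H | inner ℝ ζ₂ w ≤ c₂}|
      ≤ ‖ζ₁ - ζ₂‖ * ‖z‖ + |c₁ - c₂| := by
  rw [infDist_setOf_inner_le h₁, infDist_setOf_inner_le h₂]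
  calc _ ≤ |(inner ℝ ζ₁ z - c₁) - (inner ℝ ζ₂ z - c₂)| := abs_max_sub_max_le_abs _ _ _
    _ = |inner ℝ (ζ₁ - ζ₂) z - (c₁ - c₂)| := by rw [inner_sub_left]; ring_nf
    _ ≤ |inner ℝ (ζ₁ - ζ₂) z| + |c₁ - c₂| := abs_sub _ _
    _ ≤ ‖ζ₁ - ζ₂‖ * ‖z‖ + |c₁ - c₂| := by gcongr; exact abs_real_inner_le_norm _ _

theorem halfspace_truncated_hausdorff_lipschitz_general
    {H : Type} [NormedAddCommGroup H] [InnerProductSpace ℝ H]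
    (T : ℝ) (γ L : ℝ)
    (ζ : ℝ → H)
    (hζlip : ∀ s ∈ Icc (0:ℝ) T, ∀ t ∈ Icc (0:ℝ) T, ‖ζ t - ζ s‖ ≤ γ * |t - s|)
    (hζnorm : ∀ t ∈ Icc (0:ℝ) T, ‖ζ t‖ = 1)
    (b : ℝ → H → ℝ)
    (hb : ∀ s ∈ Icc (0:ℝ) T, ∀ t ∈ Icc (0:ℝ) T, ∀ x y : H,
      |b s x - b t y| ≤ γ * |t - s| + L * ‖x - y‖) :
    ∀ r : ℝ, 0 < r → ∀ s ∈ Icc (0:ℝ) T, ∀ t ∈ Icc (0:ℝ) T, ∀ x y : H,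
      hhausTr r ({z : H | (inner ℝ (ζ s) z : ℝ) ≤ b s x})
        ({z : H | (inner ℝ (ζ t) z : ℝ) ≤ b t y})
        ≤ γ * (r + 1) * |t - s| + L * ‖x - y‖ := by
  intro r hr s hs t ht x y
  refine hhausTr_le hr.le fun z hz => ?_
  have hzr : ‖z‖ ≤ r := mem_closedBall_zero_iff.1 hz
  have hζst : ‖ζ s - ζ t‖ ≤ γ * |t - s| := by
    simpa only [abs_sub_comm s t] using hζlip t ht s hs
  calc _ ≤ ‖ζ s - ζ t‖ * ‖z‖ + |b s x - b t y| :=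
        abs_infDist_halfspace_sub_le (hζnorm s hs) (hζnorm t ht) _ _ z
    _ ≤ ‖ζ s - ζ t‖ * r + (γ * |t - s| + L * ‖x - y‖) := by
        gcongr
        exact hb s hs t ht x y
    _ ≤ γ * |t - s| * r + (γ * |t - s| + L * ‖x - y‖) := by gcongr
    _ = γ * (r + 1) * |t - s| + L * ‖x - y‖ := by ring

/-- The moving half-space example: `C(t,x) = {z : ⟨ζ(t), z⟩ ≤ β(t,x)}` is Lipschitz
with respect to the truncated Hausdorff distance. -/
theorem halfspace_truncated_hausdorff_lipschitz
    {H : Type} [NormedAddCommGroup H] [InnerProductSpace ℝ H] [CompleteSpace H]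
    [TopologicalSpace.SeparableSpace H]
    (T : ℝ) (hT : 0 < T) (γ L : ℝ) (hγ : 0 ≤ γ) (hL : 0 ≤ L)
    (ζ : ℝ → H)
    (hζlip : ∀ s ∈ Icc (0:ℝ) T, ∀ t ∈ Icc (0:ℝ) T, ‖ζ t - ζ s‖ ≤ γ * |t - s|)
    (hζnorm : ∀ t ∈ Icc (0:ℝ) T, ‖ζ t‖ = 1)
    (b : ℝ → H → ℝ)
    (hb : ∀ s ∈ Icc (0:ℝ) T, ∀ t ∈ Icc (0:ℝ) T, ∀ x y : H,
      |b s x - b t y| ≤ γ * |t - s| + L * ‖x - y‖) :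
    ∀ r : ℝ, 0 < r → ∀ s ∈ Icc (0:ℝ) T, ∀ t ∈ Icc (0:ℝ) T, ∀ x y : H,
      hhausTr r ({z : H | (inner ℝ (ζ s) z : ℝ) ≤ b s x})
        ({z : H | (inner ℝ (ζ t) z : ℝ) ≤ b t y})
        ≤ γ * (r + 1) * |t - s| + L * ‖x - y‖ :=
  halfspace_truncated_hausdorff_lipschitz_general T γ L ζ hζlip hζnorm b hb

end
end
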